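/- arXiv:math/0303380 — 6 statements merged into one kernel-verified Lean document; each statement's English description precedes it below -/
import Mathlib

section
/- Let Y be a geodesic metric space and suppose there exist a simplicial tree Γ, constants K ≥ 1 and C ≥ 0, and a (K,C)-quasi-isometry from Y to the vertex set of Γ with its graph metric. Then Y satisfies the bottleneck property with some constant Δ > 0. -/
/-- A metric space is geodesic: any two points are joined by an isometrically
embedded segment `[0, d(x,y)] → Y`. -/
def IsGeodesicSpace (Y : Type*) [MetricSpace Y] : Prop :=
  ∀ x y : Y, ∃ γ : ℝ → Y, γ 0 = x ∧ γ (dist x y) = y ∧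
    ∀ s ∈ Set.Icc (0 : ℝ) (dist x y), ∀ t ∈ Set.Icc (0 : ℝ) (dist x y),
      dist (γ s) (γ t) = |s - t|

/-- The Bottleneck Property with constant `Δ`: for all `x, y` there is a midpoint
`m` such that every continuous path from `x` to `y` passes within distance less
than `Δ` of `m`. -/
def HasBottleneck (Y : Type*) [MetricSpace Y] (Δ : ℝ) : Prop :=
  ∀ x y : Y, ∃ m : Y,
    dist x m = dist x y / 2 ∧ dist y m = dist x y / 2 ∧
    ∀ p : Path x y, ∃ t : unitInterval, dist (p t) m < Δ


open SimpleGraph in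
/-- Cut lemma: in a tree, any discrete chain with jumps `≤ J` from `a` to `b`
passes within `J` of every vertex on the (unique) path from `a` to `b`. -/
lemma tree_cut_lemma {V : Type*} {Γ : SimpleGraph V} (hΓ : Γ.IsTree)
    {a b w : V} {P : Γ.Walk a b} (hP : P.IsPath) (hw : w ∈ P.support)
    {J : ℝ} (hJ : 0 ≤ J) {N : ℕ} (u : ℕ → V) (hu0 : u 0 = a) (huN : u N = b)
    (hjump : ∀ i < N, (Γ.dist (u i) (u (i+1)) : ℝ) ≤ J) :
    ∃ i ≤ N, (Γ.dist (u i) w : ℝ) ≤ J := by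
  classical
  by_contra hcon
  push_neg at hcon
  have hne : ∀ i ≤ N, w ≠ u i := by
    intro i hi he
    have h := hcon i hi
    rw [← he] at h
    simp [SimpleGraph.dist_self] at h
    linarith
  have key : ∀ i, i ≤ N → ∃ W : Γ.Walk a (u i), w ∉ W.support := by
    intro i hi
    induction i with
    | zero =>
      refine ⟨(Walk.nil' a).copy rfl hu0.symm, ?_⟩
      simp only [Walk.support_copy, Walk.support_nil, List.mem_singleton]
      rw [← hu0]
      exact hne 0 (Nat.zero_le N)
    | succ i ih =>
      obtain ⟨W, hW⟩ := ih (Nat.le_of_succ_le hi)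
      obtain ⟨Q, hQlen⟩ := hΓ.isConnected.exists_walk_length_eq_dist (u i) (u (i+1))
      have hwQ : w ∉ Q.support := by
        intro hmem
        have h1 : Γ.dist (u i) w ≤ (Q.takeUntil w hmem).length := SimpleGraph.dist_le _
        have h2 := Q.length_takeUntil_le hmem
        have h3 : (Γ.dist (u i) w : ℝ) ≤ (Γ.dist (u i) (u (i+1)) : ℝ) := by
          rw [← hQlen]
          exact_mod_cast le_trans h1 h2
        have h4 := hjump i (by omega)
        have h5 := hcon i (by omega)
        linarith
      refine ⟨W.append Q, ?_⟩
      rw [Walk.mem_support_append_iff]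
      push_neg
      exact ⟨hW, hwQ⟩
  obtain ⟨W, hW⟩ := key N le_rfl
  have hW' : w ∉ (W.copy rfl huN).support := by rwa [Walk.support_copy]
  have heq : P = (W.copy rfl huN).bypass :=
    (hΓ.existsUnique_path a b).unique hP (Walk.bypass_isPath _)
  rw [heq] at hw
  exact hW' (Walk.support_bypass_subset _ hw)

set_option maxHeartbeats 2000000 in
/-- **Theorem (Manning, Theorem 4.6, (1) ⇒ (2)).** A geodesic metric space
quasi-isometric to a simplicial tree (whose vertex set carries the graph metric)
satisfies the Bottleneck Property with some constant `Δ > 0`. -/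
theorem quasiisometric_to_tree_implies_bottleneck
    {Y : Type*} [MetricSpace Y] (hgeo : IsGeodesicSpace Y)
    {V : Type*} (Γ : SimpleGraph V) (hΓ : Γ.IsTree)
    (K C : ℝ) (hK : 1 ≤ K) (hC : 0 ≤ C) (q : Y → V)
    (hqi : ∀ y₁ y₂ : Y,
      dist y₁ y₂ / K - C ≤ (Γ.dist (q y₁) (q y₂) : ℝ) ∧
      (Γ.dist (q y₁) (q y₂) : ℝ) ≤ K * dist y₁ y₂ + C)
    (honto : ∀ v : V, ∃ y : Y, (Γ.dist v (q y) : ℝ) ≤ C) :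
    ∃ Δ : ℝ, 0 < Δ ∧ HasBottleneck Y Δ := by
  classical
  have hK0 : (0:ℝ) < K := by linarith
  obtain ⟨J, hJdef⟩ : ∃ J : ℝ, J = K + C := ⟨_, rfl⟩
  have hJ0 : (0:ℝ) ≤ J := by rw [hJdef]; linarith
  obtain ⟨step, hstepdef⟩ : ∃ step : ℝ, step = K * (2*J + 1 + C) := ⟨_, rfl⟩
  have hstep0 : (0:ℝ) ≤ step := by
    rw [hstepdef]
    exact mul_nonneg hK0.le (by linarith)
  obtain ⟨R0, hR0def⟩ : ∃ R0 : ℝ, R0 = K * step + C + J := ⟨_, rfl⟩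
  have hR00 : (0:ℝ) ≤ R0 := by
    have := mul_nonneg hK0.le hstep0
    rw [hR0def]; linarith
  have hΔ0 : (0:ℝ) < K * (J + R0 + C) + 1 := by
    have := mul_nonneg hK0.le (by linarith : (0:ℝ) ≤ J + R0 + C)
    linarith
  refine ⟨K * (J + R0 + C) + 1, hΔ0, ?_⟩
  intro x y
  obtain ⟨γ, hγ0, hγd, hiso⟩ := hgeo x y
  set d : ℝ := dist x y with hdd
  have hd0 : (0:ℝ) ≤ d := dist_nonneg
  have hd2mem : d/2 ∈ Set.Icc (0:ℝ) d := ⟨by linarith, by linarith⟩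
  refine ⟨γ (d/2), ?_, ?_, ?_⟩
  · rw [← hγ0, hiso 0 ⟨le_refl 0, hd0⟩ (d/2) hd2mem]
    rw [zero_sub, abs_neg, abs_of_nonneg (by linarith)]
  · rw [← hγd, hiso d ⟨hd0, le_refl d⟩ (d/2) hd2mem]
    rw [abs_of_nonneg (by linarith)]
    ring
  -- main part
  set n : ℕ := ⌈d⌉₊ + 1 with hndef
  have hn0 : (0:ℝ) < (n:ℝ) := by positivity
  obtain ⟨s, hs⟩ : ∃ s : ℕ → ℝ, ∀ i : ℕ, s i = d * i / n := ⟨_, fun _ => rfl⟩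
  have hs0 : s 0 = 0 := by rw [hs 0]; simp
  have hsn : s n = d := by rw [hs n]; field_simp
  have hsmem : ∀ i, i ≤ n → s i ∈ Set.Icc (0:ℝ) d := by
    intro i hi
    rw [hs i]
    constructor
    · exact div_nonneg (mul_nonneg hd0 (Nat.cast_nonneg _)) hn0.le
    · rw [div_le_iff₀ hn0]
      have : (i:ℝ) ≤ (n:ℝ) := by exact_mod_cast hi
      nlinarith
  have hgap : ∀ i : ℕ, s (i+1) - s i = d / n := by
    intro i
    rw [hs (i+1), hs i]
    push_cast
    ring
  have hdn : d / (n:ℝ) ≤ 1 := by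
    rw [div_le_one hn0]
    calc d ≤ (⌈d⌉₊ : ℝ) := Nat.le_ceil d
      _ ≤ (n:ℝ) := by rw [hndef]; push_cast; linarith
  obtain ⟨v, hv⟩ : ∃ v : ℕ → V, ∀ i : ℕ, v i = q (γ (s i)) := ⟨_, fun _ => rfl⟩
  have hv0 : v 0 = q x := by rw [hv 0, hs0, hγ0]
  have hvn : v n = q y := by rw [hv n, hsn, hγd]
  have hvjump : ∀ i < n, (Γ.dist (v i) (v (i+1)) : ℝ) ≤ J := by
    intro i hi
    have h1 := (hqi (γ (s i)) (γ (s (i+1)))).2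
    rw [← hv i, ← hv (i+1)] at h1
    rw [hiso _ (hsmem i hi.le) _ (hsmem (i+1) hi)] at h1
    have habs : |s i - s (i+1)| ≤ 1 := by
      rw [abs_sub_comm, abs_of_nonneg (by linarith [hgap i, div_nonneg hd0 hn0.le])]
      linarith [hgap i]
    calc (Γ.dist (v i) (v (i+1)) : ℝ) ≤ K * |s i - s (i+1)| + C := h1
      _ ≤ K * 1 + C := by nlinarith
      _ = J := by rw [hJdef]; ring
  obtain ⟨P, hP, hPlen⟩ := hΓ.isConnected.exists_path_of_dist (q x) (q y)
  -- selection of a chain point close to each vertex of the tree path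
  have hsel : ∀ k : ℕ, ∃ i, i ≤ n ∧ (Γ.dist (v i) (P.getVert k) : ℝ) ≤ J := by
    intro k
    by_cases hk : k ≤ P.length
    · have hwsup : P.getVert k ∈ P.support :=
        SimpleGraph.Walk.mem_support_iff_exists_getVert.2 ⟨k, rfl, hk⟩
      obtain ⟨i, hi, hle⟩ := tree_cut_lemma hΓ hP hwsup hJ0 v hv0 hvn hvjump
      exact ⟨i, hi, hle⟩
    · refine ⟨n, le_rfl, ?_⟩
      rw [P.getVert_of_length_le (by omega), hvn]
      simpa [SimpleGraph.dist_self] using hJ0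
  have hQ0 : ∃ i, i ≤ n ∧ (Γ.dist (v i) (P.getVert 0) : ℝ) ≤ J ∧ s i ≤ d/2 := by
    refine ⟨0, Nat.zero_le n, ?_, by rw [hs0]; linarith⟩
    rw [P.getVert_zero, hv0]
    simpa [SimpleGraph.dist_self] using hJ0
  have main : ∃ k, k ≤ P.length ∧ ∃ i, i ≤ n ∧
      (Γ.dist (v i) (P.getVert k) : ℝ) ≤ J ∧ |s i - d/2| ≤ step := by
    obtain ⟨k0, hk0⟩ : ∃ k0, k0 = Nat.findGreatest
        (fun k => ∃ i, i ≤ n ∧ (Γ.dist (v i) (P.getVert k) : ℝ) ≤ J ∧ s i ≤ d/2) P.length :=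
      ⟨_, rfl⟩
    have hk0D : k0 ≤ P.length := by rw [hk0]; exact Nat.findGreatest_le P.length
    have hQk0 : ∃ i, i ≤ n ∧ (Γ.dist (v i) (P.getVert k0) : ℝ) ≤ J ∧ s i ≤ d/2 := by
      rw [hk0]
      exact Nat.findGreatest_spec
        (P := fun k => ∃ i, i ≤ n ∧ (Γ.dist (v i) (P.getVert k) : ℝ) ≤ J ∧ s i ≤ d/2)
        (Nat.zero_le P.length) hQ0
    have hgg : ∀ kk, k0 < kk → kk ≤ P.length →
        ¬ (∃ i, i ≤ n ∧ (Γ.dist (v i) (P.getVert kk) : ℝ) ≤ J ∧ s i ≤ d/2) := by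
      intro kk h1 h2
      rw [hk0] at h1
      exact Nat.findGreatest_is_greatest h1 h2
    clear hk0
    obtain ⟨i, hin, hid, his⟩ := hQk0
    rcases eq_or_lt_of_le hk0D with hcase | hcase
    · refine ⟨k0, hk0D, i, hin, hid, ?_⟩
      have hgv : P.getVert k0 = q y := by rw [hcase]; exact P.getVert_length
      rw [hgv] at hid
      have h2 := (hqi (γ (s i)) (γ d)).1
      rw [hiso _ (hsmem i hin) _ ⟨hd0, le_refl d⟩] at h2
      rw [← hv i, hγd] at h2
      have h3 : |s i - d| = d - s i := by
        rw [abs_sub_comm]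
        exact abs_of_nonneg (by linarith [(hsmem i hin).2])
      rw [h3] at h2
      have h4 : (d - s i)/K - C ≤ J := le_trans h2 hid
      have h5 : d - s i ≤ K * (J + C) := by
        have h6 := (div_le_iff₀ hK0).1 (by linarith : (d - s i)/K ≤ J + C)
        nlinarith
      have h6 : |s i - d/2| = d/2 - s i := by
        rw [abs_sub_comm]
        exact abs_of_nonneg (by linarith)
      rw [h6, hstepdef]
      nlinarith
    · have hnQ := hgg (k0+1) (Nat.lt_succ_self k0) (by omega)
      obtain ⟨i', hi'n, hi'd⟩ := hsel (k0+1)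
      have hs' : d/2 < s i' := by
        by_contra hle
        exact hnQ ⟨i', hi'n, hi'd, le_of_not_gt hle⟩
      have hadj := P.adj_getVert_succ hcase
      have hdist1 : (Γ.dist (P.getVert k0) (P.getVert (k0+1)) : ℝ) ≤ 1 := by
        have h := SimpleGraph.dist_le (SimpleGraph.Walk.cons hadj SimpleGraph.Walk.nil)
        simp only [SimpleGraph.Walk.length_cons, SimpleGraph.Walk.length_nil] at h
        exact_mod_cast h
      have htri : (Γ.dist (v i) (v i') : ℝ) ≤ 2*J + 1 := by
        have t1 : (Γ.dist (v i) (v i') : ℝ) ≤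
            Γ.dist (v i) (P.getVert k0) + Γ.dist (P.getVert k0) (v i') := by
          exact_mod_cast hΓ.isConnected.dist_triangle
        have t2 : (Γ.dist (P.getVert k0) (v i') : ℝ) ≤
            Γ.dist (P.getVert k0) (P.getVert (k0+1)) + Γ.dist (P.getVert (k0+1)) (v i') := by
          exact_mod_cast hΓ.isConnected.dist_triangle
        have hsymm : (Γ.dist (P.getVert (k0+1)) (v i') : ℝ) ≤ J := by
          rw [SimpleGraph.dist_comm]
          exact hi'd
        linarith
      have h2 := (hqi (γ (s i)) (γ (s i'))).1
      rw [← hv i, ← hv i'] at h2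
      rw [hiso _ (hsmem i hin) _ (hsmem i' hi'n)] at h2
      have h5 : |s i - s i'| ≤ K * (2*J + 1 + C) := by
        have h6 : |s i - s i'|/K - C ≤ 2*J + 1 := le_trans h2 htri
        have h7 := (div_le_iff₀ hK0).1 (by linarith : |s i - s i'|/K ≤ 2*J+1+C)
        nlinarith
      refine ⟨k0, hk0D, i, hin, hid, ?_⟩
      have h6 : |s i - d/2| = d/2 - s i := by
        rw [abs_sub_comm]
        exact abs_of_nonneg (by linarith)
      have h7 : s i' - s i ≤ |s i - s i'| := by
        rw [abs_sub_comm]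
        exact le_abs_self _
      rw [h6, hstepdef]
      linarith
  obtain ⟨k, hkD, i, hin, hiw, his⟩ := main
  -- the midpoint maps close to the vertex `P.getVert k`
  have hqm : (Γ.dist (q (γ (d/2))) (P.getVert k) : ℝ) ≤ R0 := by
    have c1 : (Γ.dist (q (γ (d/2))) (P.getVert k) : ℝ) ≤
        Γ.dist (q (γ (d/2))) (v i) + Γ.dist (v i) (P.getVert k) := by
      exact_mod_cast hΓ.isConnected.dist_triangle
    have h1 := (hqi (γ (d/2)) (γ (s i))).2
    rw [← hv i] at h1
    have hdm : dist (γ (d/2)) (γ (s i)) = |d/2 - s i| := hiso _ hd2mem _ (hsmem i hin)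
    rw [hdm] at h1
    have habs : |d/2 - s i| ≤ step := by rw [abs_sub_comm]; exact his
    have h2 : (Γ.dist (q (γ (d/2))) (v i) : ℝ) ≤ K * step + C := by
      calc (Γ.dist (q (γ (d/2))) (v i) : ℝ) ≤ K * |d/2 - s i| + C := h1
        _ ≤ K * step + C := by nlinarith
    rw [hR0def]
    linarith
  -- now handle an arbitrary path
  intro p
  have hup : UniformContinuous p := CompactSpace.uniformContinuous_of_continuous p.continuous
  obtain ⟨δ, hδ0, hδ⟩ := Metric.uniformContinuous_iff.1 hup 1 one_pos
  set N : ℕ := ⌈1/δ⌉₊ + 1 with hNdef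
  have hN0 : (0:ℝ) < (N:ℝ) := by positivity
  have hN1 : 1/(N:ℝ) < δ := by
    have h := Nat.le_ceil (1/δ)
    have h2 : (1:ℝ)/δ < (N:ℝ) := by rw [hNdef]; push_cast; linarith
    calc 1/(N:ℝ) < 1/(1/δ) := by
          apply one_div_lt_one_div_of_lt
          · positivity
          · exact h2
      _ = δ := one_div_one_div δ
  obtain ⟨T, hT⟩ : ∃ T : ℕ → unitInterval,
      ∀ j : ℕ, T j = Set.projIcc 0 1 zero_le_one ((j:ℝ) / N) := ⟨_, fun _ => rfl⟩
  have hT0 : T 0 = 0 := by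
    rw [hT 0]
    simp only [Nat.cast_zero, zero_div]
    rw [Set.projIcc_left]
    rfl
  have hTN : T N = 1 := by
    rw [hT N, div_self hN0.ne', Set.projIcc_right]
    rfl
  obtain ⟨u, hu⟩ : ∃ u : ℕ → V, ∀ j : ℕ, u j = q (p (T j)) := ⟨_, fun _ => rfl⟩
  have hu0 : u 0 = q x := by rw [hu 0, hT0, p.source]
  have huN : u N = q y := by rw [hu N, hTN, p.target]
  have hujump : ∀ j < N, (Γ.dist (u j) (u (j+1)) : ℝ) ≤ J := by
    intro j hj
    have hdT : dist (T j) (T (j+1)) < δ := by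
      have hl : LipschitzWith 1 (Set.projIcc (0:ℝ) 1 zero_le_one) :=
        LipschitzWith.projIcc zero_le_one
      have hb := hl.dist_le_mul ((j:ℝ)/N) (((j+1:ℕ):ℝ)/N)
      rw [hT j, hT (j+1)]
      calc dist (Set.projIcc 0 1 zero_le_one ((j:ℝ)/N))
            (Set.projIcc 0 1 zero_le_one (((j+1:ℕ):ℝ)/N))
            ≤ 1 * dist ((j:ℝ)/N) (((j+1:ℕ):ℝ)/N) := hb
        _ = 1/(N:ℝ) := by
            rw [one_mul, Real.dist_eq]
            have he : (j:ℝ)/N - ((j+1:ℕ):ℝ)/N = -(1/(N:ℝ)) := by push_cast; ring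
            rw [he, abs_neg, abs_of_pos (by positivity : (0:ℝ) < 1/(N:ℝ))]
        _ < δ := hN1
    have h1 := hδ hdT
    have h2 := (hqi (p (T j)) (p (T (j+1)))).2
    rw [← hu j, ← hu (j+1)] at h2
    calc (Γ.dist (u j) (u (j+1)) : ℝ) ≤ K * dist (p (T j)) (p (T (j+1))) + C := h2
      _ ≤ K * 1 + C := by nlinarith
      _ = J := by rw [hJdef]; ring
  have hwsup : P.getVert k ∈ P.support :=
    SimpleGraph.Walk.mem_support_iff_exists_getVert.2 ⟨k, rfl, hkD⟩
  obtain ⟨j, hjN, hjw⟩ := tree_cut_lemma hΓ hP hwsup hJ0 u hu0 huN hujump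
  refine ⟨T j, ?_⟩
  have h1 := (hqi (p (T j)) (γ (d/2))).1
  rw [← hu j] at h1
  have c1 : (Γ.dist (u j) (q (γ (d/2)))) ≤
      (Γ.dist (u j) (P.getVert k) : ℝ) + Γ.dist (P.getVert k) (q (γ (d/2))) := by
    exact_mod_cast hΓ.isConnected.dist_triangle
  have hcomm : (Γ.dist (P.getVert k) (q (γ (d/2))) : ℝ) = Γ.dist (q (γ (d/2))) (P.getVert k) := by
    rw [SimpleGraph.dist_comm]
  have h2 : (Γ.dist (u j) (q (γ (d/2))) : ℝ) ≤ J + R0 := by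
    rw [hcomm] at c1
    linarith [hjw]
  have h3 : dist (p (T j)) (γ (d/2)) ≤ K * (J + R0 + C) := by
    have h4 : dist (p (T j)) (γ (d/2)) / K ≤ J + R0 + C := by linarith [le_trans h1 h2]
    have h5 := (div_le_iff₀ hK0).1 h4
    nlinarith
  linarith
end

section
/- Let w and v be infinite words in S ∪ S⁻¹ with σ(w), σ(v) ∈ {+1,−1} and w ∼ v, and let u and u' be finite words in S ∪ S⁻¹ representing the same element g of G. Then σ(uw) = σ(w) and uw ∼ u'v, where uw denotes the concatenation of u and w. Consequently, setting g·[w] = [uw] for any finite word u representing g gives a well-defined action of G on E(f,S). -/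
open Filter

variable {G : Type*} [Group G]

/-- `f : G → ℝ` is a pseudocharacter. -/
def IsPseudochar (f : G → ℝ) : Prop :=
  (∀ (α : G) (n : ℤ), f (α ^ n) = (n : ℝ) * f α) ∧
  ∃ C : ℝ, ∀ α β : G, |f α + f β - f (α * β)| ≤ C

/-- The set of letters `S ∪ S⁻¹`. -/
def letters (S : Set G) : Set G := S ∪ S⁻¹

/-- An infinite word in the letters `S ∪ S⁻¹`. -/
def IsWord (S : Set G) (w : ℕ → G) : Prop := ∀ i, w i ∈ letters S

/-- The `k`-th prefix product `w₁ ⋯ w_k` of an infinite word (`p₀ = 1`). -/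
def prefixProd (w : ℕ → G) : ℕ → G
  | 0 => 1
  | k + 1 => prefixProd w k * w k

open scoped Classical in
/-- The sign `σ(w)` of an infinite word: `1` if `f(pₖ(w)) → +∞`, `-1` if it tends
to `-∞`, and `0` otherwise. -/
noncomputable def wsign (f : G → ℝ) (w : ℕ → G) : ℤ :=
  if Tendsto (fun k => f (prefixProd w k)) atTop atTop then 1
  else if Tendsto (fun k => f (prefixProd w k)) atTop atBot then -1
  else 0

/-- The equivalence relation `w ∼ v` on infinite words. -/
def WordEquiv (f : G → ℝ) (S : Set G) (w v : ℕ → G) : Prop :=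
  wsign f w = wsign f v ∧
  ∃ C : ℝ, 0 < C ∧ ∀ D : ℝ, C < (wsign f w : ℝ) * D →
    ∃ (k l : ℕ) (d : List G),
      (∀ x ∈ d, x ∈ letters S) ∧
      prefixProd w k * d.prod = prefixProd v l ∧
      ∀ j ≤ d.length, |f (prefixProd w k * (d.take j).prod) - D| ≤ C

/-- The admissible infinite words: words in the letters of `S` with `σ(w) = ±1`. -/
abbrev AdmWord (f : G → ℝ) (S : Set G) : Type _ :=
  {w : ℕ → G // IsWord S w ∧ (wsign f w = 1 ∨ wsign f w = -1)}

/-- The set `E(f,S)` of ends of `G` relative to `f`. -/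
def Ends (f : G → ℝ) (S : Set G) :=
  Quot (fun w v : AdmWord f S => WordEquiv f S w.1 v.1)

/-- The class `[w] ∈ E(f,S)` of an admissible word. -/
def endClass (f : G → ℝ) (S : Set G) (w : AdmWord f S) : Ends f S :=
  Quot.mk _ w

/-- `E(f,S)⁺`, the set of positive ends. -/
def EndsPos (f : G → ℝ) (S : Set G) : Set (Ends f S) :=
  {x | ∃ w : AdmWord f S, wsign f w.1 = 1 ∧ x = endClass f S w}

/-- `E(f,S)⁻`, the set of negative ends. -/
def EndsNeg (f : G → ℝ) (S : Set G) : Set (Ends f S) :=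
  {x | ∃ w : AdmWord f S, wsign f w.1 = -1 ∧ x = endClass f S w}

/-- `f` is bushy with respect to `S`: both `E(f,S)⁺` and `E(f,S)⁻` have at least
two elements. -/
def IsBushyPseudochar (f : G → ℝ) (S : Set G) : Prop :=
  (∃ x ∈ EndsPos f S, ∃ y ∈ EndsPos f S, x ≠ y) ∧
  (∃ x ∈ EndsNeg f S, ∃ y ∈ EndsNeg f S, x ≠ y)

/-- `G` is finitely presented. -/
def IsFinitelyPresented (G : Type*) [Group G] : Prop :=
  ∃ (n : ℕ) (R : Finset (FreeGroup (Fin n))),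
    Nonempty (G ≃* FreeGroup (Fin n) ⧸ Subgroup.normalClosure (R : Set (FreeGroup (Fin n))))

/-- The concatenation `uw` of a finite word `u` with an infinite word `w`. -/
def concatWord (u : List G) (w : ℕ → G) : ℕ → G :=
  fun i => if i < u.length then u.getD i 1 else w (i - u.length)


section Aux

variable {G : Type*} [Group G] {f : G → ℝ}

lemma pc_map_one (hf : IsPseudochar f) : f 1 = 0 := by
  simpa using hf.1 1 0

lemma pc_map_inv (hf : IsPseudochar f) (a : G) : f a⁻¹ = - f a := by
  simpa using hf.1 a (-1)

lemma prefixProd_concat_le (u : List G) (w : ℕ → G) :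
    ∀ n, n ≤ u.length → prefixProd (concatWord u w) n = (u.take n).prod := by
  intro n
  induction n with
  | zero => intro _; simp [prefixProd]
  | succ n ih =>
    intro hn
    have hn' : n < u.length := hn
    rw [prefixProd, ih hn'.le, concatWord]
    rw [if_pos hn', List.prod_take_succ u n hn', List.getD_eq_getElem u 1 hn']

lemma prefixProd_concat (u : List G) (w : ℕ → G) (k : ℕ) :
    prefixProd (concatWord u w) (u.length + k) = u.prod * prefixProd w k := by
  induction k with
  | zero =>
    simpa [prefixProd] using prefixProd_concat_le u w u.length le_rfl
  | succ k ih =>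
    have h : u.length + (k + 1) = (u.length + k) + 1 := rfl
    rw [h, prefixProd, ih, prefixProd, concatWord]
    rw [if_neg (by omega), Nat.add_sub_cancel_left, mul_assoc]

lemma tendsto_atTop_of_bounded_diff {h h' : ℕ → ℝ} (M : ℝ)
    (hb : ∀ k, |h k - h' k| ≤ M) (hh : Tendsto h' atTop atTop) :
    Tendsto h atTop atTop := by
  apply tendsto_atTop_mono (fun k => ?_) (tendsto_atTop_add_const_right atTop (-M) hh)
  have := abs_le.mp (hb k); linarith

lemma tendsto_atBot_of_bounded_diff {h h' : ℕ → ℝ} (M : ℝ)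
    (hb : ∀ k, |h k - h' k| ≤ M) (hh : Tendsto h' atTop atBot) :
    Tendsto h atTop atBot := by
  apply tendsto_atBot_mono (fun k => ?_) (tendsto_atBot_add_const_right atTop M hh)
  have := abs_le.mp (hb k); linarith

lemma wsign_concat (hf : IsPseudochar f) (u : List G) (w : ℕ → G) :
    wsign f (concatWord u w) = wsign f w := by
  obtain ⟨Cδ, hCδ⟩ := hf.2
  set g := u.prod with hg
  have key : ∀ k, |f (prefixProd (concatWord u w) (u.length + k)) - f (prefixProd w k)|
      ≤ Cδ + |f g| := by
    intro k
    rw [prefixProd_concat, ← hg]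
    have h1 := abs_le.mp (hCδ g (prefixProd w k))
    have h2 := le_abs_self (f g)
    have h3 := neg_abs_le (f g)
    rw [abs_le]
    constructor <;> linarith
  have key' : ∀ k, |f (prefixProd w k) - f (prefixProd (concatWord u w) (u.length + k))|
      ≤ Cδ + |f g| := fun k => by rw [abs_sub_comm]; exact key k
  have comm : (fun k => f (prefixProd (concatWord u w) (k + u.length)))
      = fun k => f (prefixProd (concatWord u w) (u.length + k)) := by
    funext k; rw [Nat.add_comm]
  have hT : Tendsto (fun k => f (prefixProd (concatWord u w) k)) atTop atTop
      ↔ Tendsto (fun k => f (prefixProd w k)) atTop atTop := by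
    rw [← tendsto_add_atTop_iff_nat (f := fun k => f (prefixProd (concatWord u w) k)) u.length,
      comm]
    exact ⟨fun h => tendsto_atTop_of_bounded_diff (Cδ + |f g|) key' h,
      fun h => tendsto_atTop_of_bounded_diff (Cδ + |f g|) key h⟩
  have hB : Tendsto (fun k => f (prefixProd (concatWord u w) k)) atTop atBot
      ↔ Tendsto (fun k => f (prefixProd w k)) atTop atBot := by
    rw [← tendsto_add_atTop_iff_nat (f := fun k => f (prefixProd (concatWord u w) k)) u.length,
      comm]
    exact ⟨fun h => tendsto_atBot_of_bounded_diff (Cδ + |f g|) key' h,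
      fun h => tendsto_atBot_of_bounded_diff (Cδ + |f g|) key h⟩
  unfold wsign
  rw [propext hT, propext hB]

lemma tendsto_of_wsign_one {w : ℕ → G} (h : wsign f w = 1) :
    Tendsto (fun k => f (prefixProd w k)) atTop atTop := by
  classical
  by_contra hc
  unfold wsign at h
  rw [if_neg hc] at h
  by_cases h2 : Tendsto (fun k => f (prefixProd w k)) atTop atBot
  · rw [if_pos h2] at h; exact absurd h (by decide)
  · rw [if_neg h2] at h; exact absurd h (by decide)

lemma tendsto_of_wsign_neg_one {w : ℕ → G} (h : wsign f w = -1) :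
    Tendsto (fun k => f (prefixProd w k)) atTop atBot := by
  classical
  unfold wsign at h
  by_cases h1 : Tendsto (fun k => f (prefixProd w k)) atTop atTop
  · rw [if_pos h1] at h; exact absurd h (by decide)
  · rw [if_neg h1] at h
    by_cases h2 : Tendsto (fun k => f (prefixProd w k)) atTop atBot
    · exact h2
    · rw [if_neg h2] at h; exact absurd h (by decide)

lemma wordEquiv_refl (hf : IsPseudochar f) (S : Finset G) (w : ℕ → G)
    (hw : IsWord (S : Set G) w) (hσ : wsign f w = 1 ∨ wsign f w = -1) :
    WordEquiv f (S : Set G) w w := by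
  classical
  obtain ⟨Cδ, hCδ⟩ := hf.2
  have hCδ0 : 0 ≤ Cδ := by simpa [pc_map_one hf] using hCδ 1 1
  have hSne : S.Nonempty := by
    rcases hw 0 with hs | hs
    · exact ⟨w 0, by exact_mod_cast hs⟩
    · exact ⟨(w 0)⁻¹, by exact_mod_cast Set.mem_inv.mp hs⟩
  set M := S.sup' hSne (fun s => |f s|) with hMdef
  have hM : ∀ s ∈ letters (S : Set G), |f s| ≤ M := by
    intro s hs
    rcases hs with hs | hs
    · exact Finset.le_sup' (fun s => |f s|) (by exact_mod_cast hs)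
    · have h1 : s⁻¹ ∈ S := by exact_mod_cast Set.mem_inv.mp hs
      have h2 : |f s⁻¹| ≤ M := Finset.le_sup' (fun s => |f s|) h1
      rwa [pc_map_inv hf, abs_neg] at h2
  have hM0 : 0 ≤ M := le_trans (abs_nonneg _) (hM (w 0) (hw 0))
  have hstep : ∀ k, |f (prefixProd w (k + 1)) - f (prefixProd w k)| ≤ M + Cδ := by
    intro k
    have h1 := abs_le.mp (hCδ (prefixProd w k) (w k))
    have h2 := abs_le.mp (hM (w k) (hw k))
    show |f (prefixProd w k * w k) - f (prefixProd w k)| ≤ M + Cδ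
    rw [abs_le]
    constructor <;> linarith
  refine ⟨rfl, M + Cδ + 1, by linarith, ?_⟩
  intro D hD
  set s : ℝ := (wsign f w : ℝ) with hsdef
  have habs : |s| = 1 := by
    rcases hσ with h | h <;> rw [hsdef, h] <;> norm_num
  have hh : Tendsto (fun k => s * f (prefixProd w k)) atTop atTop := by
    rcases hσ with h | h
    · have hs1 : s = 1 := by rw [hsdef, h]; norm_num
      simpa [hs1] using tendsto_of_wsign_one h
    · have hs1 : s = -1 := by rw [hsdef, h]; norm_num
      rw [hs1]
      simpa [neg_one_mul] using tendsto_neg_atTop_iff.mpr (tendsto_of_wsign_neg_one h)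
  have hex : ∃ N, s * D ≤ s * f (prefixProd w N) :=
    (hh.eventually_ge_atTop (s * D)).exists
  obtain ⟨N, hNspec, hmin⟩ : ∃ N, s * D ≤ s * f (prefixProd w N) ∧
      ∀ m < N, s * f (prefixProd w m) < s * D :=
    ⟨Nat.find hex, Nat.find_spec hex, fun m hm => not_le.mp (Nat.find_min hex hm)⟩
  rcases N with _ | m
  · exfalso
    have h0 : f (prefixProd w 0) = 0 := by
      show f 1 = 0
      exact pc_map_one hf
    rw [h0, mul_zero] at hNspec
    linarith
  · have hlt := hmin m (Nat.lt_succ_self m)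
    refine ⟨m + 1, m + 1, [], by simp, by simp, ?_⟩
    intro j hj
    have hj0 : j = 0 := Nat.le_zero.mp hj
    subst hj0
    simp only [List.take_nil, List.prod_nil, mul_one]
    have e1 : s * (f (prefixProd w (m + 1)) - f (prefixProd w m)) ≤ M + Cδ := by
      calc s * (f (prefixProd w (m + 1)) - f (prefixProd w m))
          ≤ |s * (f (prefixProd w (m + 1)) - f (prefixProd w m))| := le_abs_self _
        _ = |f (prefixProd w (m + 1)) - f (prefixProd w m)| := by
            rw [abs_mul, habs, one_mul]
        _ ≤ M + Cδ := hstep m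
    have e2 : |f (prefixProd w (m + 1)) - D| = |s * f (prefixProd w (m + 1)) - s * D| := by
      rw [← mul_sub, abs_mul, habs, one_mul]
    have e3 : s * (f (prefixProd w (m + 1)) - f (prefixProd w m))
        = s * f (prefixProd w (m + 1)) - s * f (prefixProd w m) := mul_sub _ _ _
    rw [e2, abs_le]
    constructor <;> linarith

lemma wordEquiv_concat (hf : IsPseudochar f) (S : Finset G) {w v : ℕ → G}
    {u u' : List G} {g : G}
    (hσw : wsign f w = 1 ∨ wsign f w = -1)
    (hwv : WordEquiv f (S : Set G) w v)
    (hu : u.prod = g) (hu' : u'.prod = g) :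
    WordEquiv f (S : Set G) (concatWord u w) (concatWord u' v) := by
  obtain ⟨Cδ, hCδ⟩ := hf.2
  have hCδ0 : 0 ≤ Cδ := by simpa [pc_map_one hf] using hCδ 1 1
  obtain ⟨hsgn, C₀, hC₀pos, hpath⟩ := hwv
  have hw' : wsign f (concatWord u w) = wsign f w := wsign_concat hf u w
  have hv' : wsign f (concatWord u' v) = wsign f v := wsign_concat hf u' v
  refine ⟨by rw [hw', hv', hsgn], C₀ + Cδ + |f g| + 1,
    by have := abs_nonneg (f g); linarith, ?_⟩
  intro D hD
  rw [hw'] at hD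
  set s : ℝ := (wsign f w : ℝ) with hsdef
  have habs : |s| = 1 := by
    rcases hσw with h | h <;> rw [hsdef, h] <;> norm_num
  have hD' : C₀ < s * (D - f g) := by
    have h1 : s * f g ≤ |f g| := by
      calc s * f g ≤ |s * f g| := le_abs_self _
        _ = |f g| := by rw [abs_mul, habs, one_mul]
    have h2 : s * (D - f g) = s * D - s * f g := mul_sub _ _ _
    linarith
  obtain ⟨k, l, d, hd, hprod, hjj⟩ := hpath (D - f g) hD'
  refine ⟨u.length + k, u'.length + l, d, hd, ?_, ?_⟩
  · rw [prefixProd_concat, prefixProd_concat, hu, hu', mul_assoc, hprod]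
  · intro j hj
    rw [prefixProd_concat, hu, mul_assoc]
    have h1 := abs_le.mp (hCδ g (prefixProd w k * (d.take j).prod))
    have h2 := abs_le.mp (hjj j hj)
    have h3 := abs_nonneg (f g)
    rw [abs_le]
    constructor <;> linarith

lemma isWord_concat {S : Set G} {u : List G} {w : ℕ → G}
    (hu : ∀ x ∈ u, x ∈ letters S) (hw : IsWord S w) : IsWord S (concatWord u w) := by
  intro i
  unfold concatWord
  split_ifs with h
  · rw [List.getD_eq_getElem u 1 h]
    exact hu _ (List.getElem_mem h)
  · exact hw _

lemma concatWord_nil (w : ℕ → G) : concatWord [] w = w := by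
  funext i; simp [concatWord]

lemma concatWord_append (u u' : List G) (w : ℕ → G) :
    concatWord u (concatWord u' w) = concatWord (u ++ u') w := by
  funext i
  simp only [concatWord, List.length_append]
  by_cases h1 : i < u.length
  · rw [if_pos h1, if_pos (by omega : i < u.length + u'.length)]
    exact (List.getD_append u u' 1 i h1).symm
  · by_cases h2 : i < u.length + u'.length
    · rw [if_neg h1, if_pos (by omega : i - u.length < u'.length), if_pos h2]
      exact (List.getD_append_right u u' 1 i (by omega)).symm
    · rw [if_neg h1, if_neg (by omega : ¬ i - u.length < u'.length), if_neg h2]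
      congr 1
      omega

end Aux

/-- **Lemma (Manning, Lemma 2.9).** If `w ∼ v` and `u`, `u'` are finite words in the
letters of `S` representing the same group element `g`, then `σ(uw) = σ(w)` and
`uw ∼ u'v`.  Consequently `g·[w] = [uw]` is a well-defined action of `G` on
`E(f,S)`. -/
theorem concat_well_defined_action
    {G : Type*} [Group G] (hGfp : IsFinitelyPresented G)
    (f : G → ℝ) (hf : IsPseudochar f)
    (S : Finset G) (hS : Subgroup.closure (S : Set G) = ⊤) :
    (∀ (w v : ℕ → G) (u u' : List G) (g : G),
      IsWord (S : Set G) w → IsWord (S : Set G) v →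
      (wsign f w = 1 ∨ wsign f w = -1) → (wsign f v = 1 ∨ wsign f v = -1) →
      WordEquiv f (S : Set G) w v →
      (∀ x ∈ u, x ∈ letters (S : Set G)) → (∀ x ∈ u', x ∈ letters (S : Set G)) →
      u.prod = g → u'.prod = g →
      wsign f (concatWord u w) = wsign f w ∧
        WordEquiv f (S : Set G) (concatWord u w) (concatWord u' v)) ∧
    ∃ act : G → Ends f (S : Set G) → Ends f (S : Set G),
      (∀ x, act 1 x = x) ∧
      (∀ g h x, act (g * h) x = act g (act h x)) ∧
      (∀ (g : G) (u : List G) (w : AdmWord f (S : Set G))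
        (h : IsWord (S : Set G) (concatWord u w.1) ∧
          (wsign f (concatWord u w.1) = 1 ∨ wsign f (concatWord u w.1) = -1)),
        (∀ x ∈ u, x ∈ letters (S : Set G)) → u.prod = g →
        act g (endClass f (S : Set G) w) = endClass f (S : Set G) ⟨concatWord u w.1, h⟩) := by
  classical
  constructor
  · intro w v u u' g hw hv hσw hσv hwv hu hu' hup hup'
    exact ⟨wsign_concat hf u w, wordEquiv_concat hf S hσw hwv hup hup'⟩
  · have hrep : ∀ g : G, ∃ us : List G,
        (∀ x ∈ us, x ∈ letters (S : Set G)) ∧ us.prod = g := by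
      intro g
      have hg : g ∈ Submonoid.closure ((S : Set G) ∪ (S : Set G)⁻¹) := by
        have h1 : g ∈ (Subgroup.closure (S : Set G)).toSubmonoid := by
          rw [hS]; trivial
        rwa [Subgroup.closure_toSubmonoid] at h1
      obtain ⟨l, hl1, hl2⟩ := Submonoid.exists_list_of_mem_closure hg
      exact ⟨l, hl1, hl2⟩
    choose U hU1 hU2 using hrep
    refine ⟨fun g => Quot.lift
      (fun w : AdmWord f (S : Set G) => endClass f (S : Set G)
        ⟨concatWord (U g) w.1, isWord_concat (hU1 g) w.2.1,
          by rw [wsign_concat hf]; exact w.2.2⟩)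
      (fun a b hab => Quot.sound
        (wordEquiv_concat hf S a.2.2 hab (hU2 g) (hU2 g))), ?_, ?_, ?_⟩
    · apply Quot.ind
      intro w
      apply Quot.sound
      have h0 := wordEquiv_concat hf S (u := U 1) (u' := ([] : List G)) (g := 1)
        w.2.2 (wordEquiv_refl hf S w.1 w.2.1 w.2.2) (hU2 1) List.prod_nil
      rwa [concatWord_nil] at h0
    · intro g h
      apply Quot.ind
      intro w
      apply Quot.sound
      have hprod : (U g ++ U h).prod = g * h := by
        rw [List.prod_append, hU2, hU2]
      have h0 := wordEquiv_concat hf S (u := U (g * h)) (u' := U g ++ U h) (g := g * h)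
        w.2.2 (wordEquiv_refl hf S w.1 w.2.1 w.2.2) (hU2 (g * h)) hprod
      rwa [← concatWord_append] at h0
    · intro g u w hadm hu hup
      apply Quot.sound
      exact wordEquiv_concat hf S w.2.2
        (wordEquiv_refl hf S w.1 w.2.1 w.2.2) (hU2 g) hup
end

section
/- Let S and T be two finite generating sets of G. For each s ∈ S ∪ S⁻¹ choose a finite word τ(s) in T ∪ T⁻¹ representing s in G, and for an infinite word w = w₁w₂w₃… in S ∪ S⁻¹ let τ(w) denote the infinite concatenation τ(w₁)τ(w₂)τ(w₃)… . Then the assignment [w] ↦ [τ(w)] is a well-defined bijection from E(f,S) to E(f,T), which carries E(f,S)⁺ to E(f,T)⁺ and E(f,S)⁻ to E(f,T)⁻. -/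
open Filter

variable {G : Type*} [Group G]

/-- The infinite concatenation `τ(w₁)τ(w₂)τ(w₃)…`, where each `τ(s)` is a nonempty
finite word.  (Since each block is nonempty, the `n`-th letter already occurs
among the first `n+1` blocks.) -/
def infConcat (τ : G → List G) (w : ℕ → G) : ℕ → G :=
  fun n => ((List.range (n + 1)).flatMap fun i => τ (w i)).getD n 1

set_option linter.unusedSectionVars false
set_option linter.unusedVariables false
set_option maxHeartbeats 1000000

namespace EndsAux

lemma prefixProd_eq_prod (w : ℕ → G) (k : ℕ) :
    prefixProd w k = ((List.range k).map w).prod := by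
  induction k with
  | zero => rfl
  | succ k ih =>
    rw [prefixProd, List.range_succ, List.map_append, List.prod_append, ih]
    simp

/-- the concatenation of the first `k` blocks -/
def blocks (τ : G → List G) (w : ℕ → G) (k : ℕ) : List G :=
  (List.range k).flatMap fun i => τ (w i)

lemma blocks_succ (τ : G → List G) (w : ℕ → G) (k : ℕ) :
    blocks τ w (k + 1) = blocks τ w k ++ τ (w k) := by
  simp [blocks, List.range_succ]

lemma blocks_prefix (τ : G → List G) (w : ℕ → G) {k K : ℕ} (h : k ≤ K) :
    ∃ r, blocks τ w K = blocks τ w k ++ r := by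
  induction K with
  | zero => obtain rfl := Nat.le_zero.mp h; exact ⟨[], by simp⟩
  | succ K ih =>
    rcases Nat.lt_or_ge k (K + 1) with hk | hk
    · obtain ⟨r, hr⟩ := ih (Nat.lt_succ_iff.mp hk)
      exact ⟨r ++ τ (w K), by rw [blocks_succ, hr, List.append_assoc]⟩
    · have : k = K + 1 := le_antisymm h hk
      exact ⟨[], by simp [this]⟩

lemma length_blocks_ge {τ : G → List G} {w : ℕ → G} (hne : ∀ i, τ (w i) ≠ []) (k : ℕ) :
    k ≤ (blocks τ w k).length := by
  induction k with
  | zero => simp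
  | succ k ih =>
    rw [blocks_succ, List.length_append]
    have : 1 ≤ (τ (w k)).length := List.length_pos_iff.mpr (hne k)
    omega

lemma infConcat_eq_getD {τ : G → List G} {w : ℕ → G} (hne : ∀ i, τ (w i) ≠ [])
    {n K : ℕ} (h : n < (blocks τ w K).length) :
    infConcat τ w n = (blocks τ w K).getD n 1 := by
  have key : ∀ {K₁ K₂ : ℕ}, K₁ ≤ K₂ → n < (blocks τ w K₁).length →
      (blocks τ w K₂).getD n 1 = (blocks τ w K₁).getD n 1 := by
    intro K₁ K₂ hK hn
    obtain ⟨r, hr⟩ := blocks_prefix τ w hK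
    rw [hr, List.getD_append _ _ _ _ hn]
  have hn1 : n < (blocks τ w (n + 1)).length :=
    lt_of_lt_of_le (Nat.lt_succ_self n) (length_blocks_ge hne _)
  show (blocks τ w (n+1)).getD n 1 = _
  rcases le_or_gt K (n + 1) with hK | hK
  · exact key hK h
  · exact (key hK.le hn1).symm

lemma take_map_range {τ : G → List G} {w : ℕ → G} (hne : ∀ i, τ (w i) ≠ [])
    {m K : ℕ} (h : m ≤ (blocks τ w K).length) :
    (List.range m).map (infConcat τ w) = (blocks τ w K).take m := by
  apply List.ext_getElem
  · simpa using h
  · intro i h1 h2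
    simp only [List.getElem_map, List.getElem_range, List.getElem_take]
    have hi : i < (blocks τ w K).length := by
      simp only [List.length_map, List.length_range] at h1
      omega
    rw [infConcat_eq_getD hne hi, List.getD_eq_getElem _ _ hi]

lemma prefixProd_infConcat {τ : G → List G} {w : ℕ → G} (hne : ∀ i, τ (w i) ≠ [])
    {m K : ℕ} (h : m ≤ (blocks τ w K).length) :
    prefixProd (infConcat τ w) m = ((blocks τ w K).take m).prod := by
  rw [prefixProd_eq_prod, take_map_range hne h]

lemma prod_blocks {τ : G → List G} {w : ℕ → G} (hpr : ∀ i, (τ (w i)).prod = w i) (k : ℕ) :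
    (blocks τ w k).prod = prefixProd w k := by
  induction k with
  | zero => rfl
  | succ k ih => rw [blocks_succ, List.prod_append, ih, hpr, prefixProd]

lemma prefixProd_infConcat_boundary {τ : G → List G} {w : ℕ → G}
    (hne : ∀ i, τ (w i) ≠ []) (hpr : ∀ i, (τ (w i)).prod = w i) (k : ℕ) :
    prefixProd (infConcat τ w) ((blocks τ w k).length) = prefixProd w k := by
  rw [prefixProd_infConcat hne le_rfl, List.take_length, prod_blocks hpr]

lemma prod_flatMap_eq (τ : G → List G) :
    ∀ d : List G, (∀ x ∈ d, (τ x).prod = x) → (d.flatMap τ).prod = d.prod := by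
  intro d
  induction d with
  | nil => intro _; rfl
  | cons x t ih =>
    intro h
    rw [List.flatMap_cons, List.prod_append, List.prod_cons,
      ih (fun y hy => h y (List.mem_cons_of_mem _ hy)), h x (List.mem_cons_self)]

lemma length_flatMap_le (τ : G → List G) (Λ : ℕ) :
    ∀ d : List G, (∀ x ∈ d, (τ x).length ≤ Λ) → (d.flatMap τ).length ≤ d.length * Λ := by
  intro d
  induction d with
  | nil => intro _; simp
  | cons x t ih =>
    intro h
    rw [List.flatMap_cons, List.length_append, List.length_cons]
    have h1 := h x (List.mem_cons_self)
    have h2 := ih (fun y hy => h y (List.mem_cons_of_mem _ hy))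
    calc (τ x).length + (t.flatMap τ).length ≤ Λ + t.length * Λ := by omega
      _ = (t.length + 1) * Λ := by ring

lemma take_flatMap_decomp (τ : G → List G) :
    ∀ (d : List G), (∀ x ∈ d, (τ x).prod = x) → ∀ (j : ℕ), j ≤ (d.flatMap τ).length →
    ∃ i p, i ≤ d.length ∧
      (p = 1 ∨ ∃ x ∈ d, ∃ r, p = ((τ x).take r).prod) ∧
      ((d.flatMap τ).take j).prod = (d.take i).prod * p ∧
      j ≤ ((d.take (i + 1)).flatMap τ).length := by
  intro d
  induction d with
  | nil =>
    intro _ j hj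
    simp only [List.flatMap_nil, List.length_nil, Nat.le_zero] at hj
    exact ⟨0, 1, le_rfl, Or.inl rfl, by simp [hj], by simp [hj]⟩
  | cons x t ih =>
    intro hd j hj
    rcases le_or_gt j (τ x).length with hle | hlt
    · refine ⟨0, ((τ x).take j).prod, Nat.zero_le _,
        Or.inr ⟨x, List.mem_cons_self, j, rfl⟩, ?_, ?_⟩
      · rw [List.flatMap_cons, List.take_append_of_le_length hle]
        simp
      · rw [show (x :: t).take (0 + 1) = [x] from rfl]
        simpa using hle
    · have hj' : j - (τ x).length ≤ (t.flatMap τ).length := by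
        rw [List.flatMap_cons, List.length_append] at hj
        omega
      obtain ⟨i, p, hi, hp, hprod, hlen⟩ :=
        ih (fun y hy => hd y (List.mem_cons_of_mem _ hy)) (j - (τ x).length) hj'
      refine ⟨i + 1, p, by simpa using hi, ?_, ?_, ?_⟩
      · rcases hp with h | ⟨y, hy, r, hr⟩
        · exact Or.inl h
        · exact Or.inr ⟨y, List.mem_cons_of_mem _ hy, r, hr⟩
      · rw [List.flatMap_cons, List.take_append,
          List.take_of_length_le hlt.le, List.prod_append, hprod,
          List.take_succ_cons, List.prod_cons, hd x (List.mem_cons_self), mul_assoc]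
      · rw [List.take_succ_cons, List.flatMap_cons, List.length_append]
        omega

lemma not_tendsto_both {a : ℕ → ℝ} (h1 : Tendsto a atTop atTop) (h2 : Tendsto a atTop atBot) :
    False := by
  obtain ⟨n, hn1, hn2⟩ := ((h1.eventually_ge_atTop 1).and (h2.eventually_le_atBot 0)).exists
  linarith

lemma wsign_eq_one_iff (f : G → ℝ) (w : ℕ → G) :
    wsign f w = 1 ↔ Tendsto (fun k => f (prefixProd w k)) atTop atTop := by
  unfold wsign
  split_ifs with h1 h2
  · simp [h1]
  · simp [h1]
  · simp [h1]

lemma wsign_eq_neg_one_iff (f : G → ℝ) (w : ℕ → G) :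
    wsign f w = -1 ↔ Tendsto (fun k => f (prefixProd w k)) atTop atBot := by
  unfold wsign
  split_ifs with h1 h2
  · exact ⟨fun h => absurd h (by decide), fun h => (not_tendsto_both h1 h).elim⟩
  · simp [h2]
  · simp [h2]

lemma wsign_eq_zero {f : G → ℝ} {w : ℕ → G}
    (h1 : ¬ Tendsto (fun k => f (prefixProd w k)) atTop atTop)
    (h2 : ¬ Tendsto (fun k => f (prefixProd w k)) atTop atBot) :
    wsign f w = 0 := by
  unfold wsign
  rw [if_neg h1, if_neg h2]

lemma wsign_eq_of_iff {f : G → ℝ} {w v : ℕ → G}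
    (h1 : Tendsto (fun k => f (prefixProd w k)) atTop atTop ↔
      Tendsto (fun k => f (prefixProd v k)) atTop atTop)
    (h2 : Tendsto (fun k => f (prefixProd w k)) atTop atBot ↔
      Tendsto (fun k => f (prefixProd v k)) atTop atBot) :
    wsign f w = wsign f v := by
  by_cases hT : Tendsto (fun k => f (prefixProd w k)) atTop atTop
  · rw [(wsign_eq_one_iff f w).2 hT, ((wsign_eq_one_iff f v).2 (h1.1 hT)).symm]
  · by_cases hB : Tendsto (fun k => f (prefixProd w k)) atTop atBot
    · rw [(wsign_eq_neg_one_iff f w).2 hB, ((wsign_eq_neg_one_iff f v).2 (h2.1 hB)).symm]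
    · rw [wsign_eq_zero hT hB, (wsign_eq_zero (fun h => hT (h1.2 h)) (fun h => hB (h2.2 h))).symm]

lemma defect_jump {f : G → ℝ} {C₀ : ℝ} (hC : ∀ α β : G, |f α + f β - f (α * β)| ≤ C₀)
    (a p : G) : |f (a * p) - f a| ≤ |f p| + C₀ := by
  have h := hC a p
  rw [abs_le] at h ⊢
  constructor <;> [nlinarith [neg_abs_le (f p)]; nlinarith [le_abs_self (f p)]]

lemma tendsto_atTop_of_near {a b : ℕ → ℝ} {κ : ℕ → ℕ} (hκ : Tendsto κ atTop atTop)
    {R : ℝ} (h : ∀ m, |b m - a (κ m)| ≤ R) (ha : Tendsto a atTop atTop) :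
    Tendsto b atTop atTop := by
  have h2 : Tendsto (fun m => a (κ m) + -R) atTop atTop :=
    tendsto_atTop_add_const_right _ _ (ha.comp hκ)
  refine tendsto_atTop_mono (fun m => ?_) h2
  have := abs_le.mp (h m)
  linarith [this.1]

section Transfer

variable {f : G → ℝ} {C₀ : ℝ} (hC : ∀ α β : G, |f α + f β - f (α * β)| ≤ C₀)
  {τ : G → List G} {w : ℕ → G}
  (hne : ∀ i, τ (w i) ≠ []) (hpr : ∀ i, (τ (w i)).prod = w i)
  {M : ℝ} (hM : ∀ i r, |f (((τ (w i)).take r).prod)| ≤ M)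
  {Λ : ℕ} (hΛ : ∀ i, (τ (w i)).length ≤ Λ)

include hC hne hpr hM in
lemma compare (m : ℕ) :
    ∃ i, |f (prefixProd (infConcat τ w) m) - f (prefixProd w i)| ≤ M + C₀ ∧
      m ≤ ((((List.range m).map w).take (i + 1)).flatMap τ).length := by
  have hblocks : blocks τ w m = ((List.range m).map w).flatMap τ := by
    rw [List.flatMap_map]; rfl
  have hd : ∀ x ∈ (List.range m).map w, (τ x).prod = x := by
    intro x hx
    obtain ⟨i, _, rfl⟩ := List.mem_map.mp hx
    exact hpr i
  have hlen : m ≤ (((List.range m).map w).flatMap τ).length := by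
    rw [← hblocks]; exact length_blocks_ge hne m
  obtain ⟨i, p, hi, hp, hprod, hlen2⟩ := take_flatMap_decomp τ _ hd m hlen
  refine ⟨i, ?_, hlen2⟩
  have htake : ((List.range m).map w).take i = (List.range i).map w := by
    have hi' : i ≤ m := by simpa using hi
    rw [← List.map_take, List.take_range, inf_eq_left.mpr hi']
  have h1 : prefixProd (infConcat τ w) m = prefixProd w i * p := by
    rw [prefixProd_infConcat hne (K := m) (by rw [← hblocks] at hlen; exact hlen),
      hblocks, hprod, htake, ← prefixProd_eq_prod]
  have hfp : |f p| ≤ M := by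
    rcases hp with rfl | ⟨x, hx, r, rfl⟩
    · simpa using hM 0 0
    · obtain ⟨i', _, rfl⟩ := List.mem_map.mp hx
      exact hM i' r
  rw [h1]
  calc |f (prefixProd w i * p) - f (prefixProd w i)| ≤ |f p| + C₀ := defect_jump hC _ _
    _ ≤ M + C₀ := by linarith

include hC hne hpr hM hΛ in
lemma wsign_infConcat_eq (hΛ1 : 1 ≤ Λ) : wsign f (infConcat τ w) = wsign f w := by
  choose κ hκ1 hκ2 using compare hC hne hpr hM (M := M)
  have hκ3 : ∀ m, m ≤ (κ m + 1) * Λ := by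
    intro m
    refine le_trans (hκ2 m) ?_
    refine le_trans (length_flatMap_le τ Λ _ ?_) ?_
    · intro x hx
      have hx' := List.mem_of_mem_take hx
      obtain ⟨i', _, rfl⟩ := List.mem_map.mp hx'
      exact hΛ i'
    · have : (((List.range m).map w).take (κ m + 1)).length ≤ κ m + 1 := by
        simp [List.length_take]
      exact Nat.mul_le_mul_right _ this
  have hκ : Tendsto κ atTop atTop := by
    rw [tendsto_atTop_atTop]
    intro N
    refine ⟨N * Λ + 1, fun m hm => ?_⟩
    by_contra hlt
    push_neg at hlt
    have : (κ m + 1) * Λ ≤ N * Λ := Nat.mul_le_mul_right _ (by omega)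
    have := hκ3 m
    omega
  have hB : Tendsto (fun k => (blocks τ w k).length) atTop atTop :=
    tendsto_atTop_mono (fun k => length_blocks_ge hne k) tendsto_id
  have hcomp : ∀ k, f (prefixProd w k) = f (prefixProd (infConcat τ w) ((blocks τ w k).length)) :=
    fun k => by rw [prefixProd_infConcat_boundary hne hpr]
  apply wsign_eq_of_iff
  · constructor
    · intro h
      exact Tendsto.congr (fun k => (hcomp k).symm) (h.comp hB)
    · intro h
      exact tendsto_atTop_of_near hκ hκ1 h
  · constructor
    · intro h
      exact Tendsto.congr (fun k => (hcomp k).symm) (h.comp hB)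
    · intro h
      rw [← tendsto_neg_atTop_iff] at h ⊢
      have h2 : ∀ m, |(-f (prefixProd (infConcat τ w) m)) - (-f (prefixProd w (κ m)))| ≤ M + C₀ := by
        intro m
        rw [show -f (prefixProd (infConcat τ w) m) - -f (prefixProd w (κ m)) =
          -(f (prefixProd (infConcat τ w) m) - f (prefixProd w (κ m))) from by ring, abs_neg]
        exact hκ1 m
      exact tendsto_atTop_of_near hκ h2 h

end Transfer

lemma wordEquiv_map {f : G → ℝ} {C₀ : ℝ} (hC : ∀ α β : G, |f α + f β - f (α * β)| ≤ C₀)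
    (hC₀ : 0 ≤ C₀)
    {S₀ T₀ : Set G} {τ : G → List G}
    (hτ : ∀ s ∈ letters S₀, τ s ≠ [] ∧ (∀ x ∈ τ s, x ∈ letters T₀) ∧ (τ s).prod = s)
    {M : ℝ} (hM : ∀ s ∈ letters S₀, ∀ r, |f (((τ s).take r).prod)| ≤ M) (hM0 : 0 ≤ M)
    {w v : ℕ → G} (hw : IsWord S₀ w) (hv : IsWord S₀ v)
    (hsw : wsign f (infConcat τ w) = wsign f w) (hsv : wsign f (infConcat τ v) = wsign f v)
    (h : WordEquiv f S₀ w v) : WordEquiv f T₀ (infConcat τ w) (infConcat τ v) := by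
  obtain ⟨hsign, C, hC0, hpath⟩ := h
  have hnew : ∀ i, τ (w i) ≠ [] := fun i => (hτ _ (hw i)).1
  have hnev : ∀ i, τ (v i) ≠ [] := fun i => (hτ _ (hv i)).1
  have hprw : ∀ i, (τ (w i)).prod = w i := fun i => (hτ _ (hw i)).2.2
  have hprv : ∀ i, (τ (v i)).prod = v i := fun i => (hτ _ (hv i)).2.2
  refine ⟨by rw [hsw, hsv, hsign], C + (M + C₀), by linarith, ?_⟩
  intro D hD
  rw [hsw] at hD
  obtain ⟨k, l, d, hd1, hd2, hd3⟩ := hpath D (by linarith)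
  have hdprod : ∀ x ∈ d, (τ x).prod = x := fun x hx => (hτ x (hd1 x hx)).2.2
  refine ⟨(blocks τ w k).length, (blocks τ v l).length, d.flatMap τ, ?_, ?_, ?_⟩
  · intro x hx
    obtain ⟨y, hy, hxy⟩ := List.mem_flatMap.mp hx
    exact (hτ y (hd1 y hy)).2.1 x hxy
  · rw [prefixProd_infConcat_boundary hnew hprw, prefixProd_infConcat_boundary hnev hprv,
      prod_flatMap_eq τ d hdprod, hd2]
  · intro j hj
    obtain ⟨i, p, hi, hp, hprod, -⟩ := take_flatMap_decomp τ d hdprod j hj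
    rw [prefixProd_infConcat_boundary hnew hprw, hprod, ← mul_assoc]
    have h1 : |f (prefixProd w k * (d.take i).prod) - D| ≤ C := hd3 i hi
    have hfp : |f p| ≤ M := by
      rcases hp with rfl | ⟨x, hx, r, rfl⟩
      · have := hM (w 0) (hw 0) 0
        simpa using this
      · exact hM x (hd1 x hx) r
    have h2 := defect_jump hC (prefixProd w k * (d.take i).prod) p
    calc |f (prefixProd w k * (d.take i).prod * p) - D|
        = |(f (prefixProd w k * (d.take i).prod * p) - f (prefixProd w k * (d.take i).prod))
            + (f (prefixProd w k * (d.take i).prod) - D)| := by ring_nf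
      _ ≤ |f (prefixProd w k * (d.take i).prod * p) - f (prefixProd w k * (d.take i).prod)|
            + |f (prefixProd w k * (d.take i).prod) - D| := abs_add_le _ _
      _ ≤ (M + C₀) + C := by linarith
      _ = C + (M + C₀) := by ring

lemma exists_near {a : ℕ → ℝ} {J : ℝ} (hJ : ∀ m, |a (m + 1) - a m| ≤ J) (h0 : a 0 = 0)
    (ha : Tendsto a atTop atTop) {D : ℝ} (hD : 0 < D) : ∃ m, |a m - D| ≤ J := by
  have hex : ∃ m, D ≤ a m := (ha.eventually_ge_atTop D).exists
  classical
  have hm : D ≤ a (Nat.find hex) := Nat.find_spec hex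
  have hm0 : Nat.find hex ≠ 0 := by
    intro h
    rw [h, h0] at hm
    linarith
  obtain ⟨m', hm'⟩ := Nat.exists_eq_succ_of_ne_zero hm0
  rw [hm'] at hm
  have hlt : a m' < D := by
    by_contra hge
    exact Nat.find_min hex (hm' ▸ Nat.lt_succ_self m') (le_of_not_gt hge)
  have hJ' := hJ m'
  refine ⟨m' + 1, ?_⟩
  rw [abs_le] at hJ' ⊢
  constructor <;> linarith

lemma exists_near_bot {a : ℕ → ℝ} {J : ℝ} (hJ : ∀ m, |a (m + 1) - a m| ≤ J) (h0 : a 0 = 0)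
    (ha : Tendsto a atTop atBot) {D : ℝ} (hD : D < 0) : ∃ m, |a m - D| ≤ J := by
  have ha' : Tendsto (fun m => -a m) atTop atTop := tendsto_neg_atTop_iff.mpr ha
  have hJ' : ∀ m, |(-a (m + 1)) - (-a m)| ≤ J := by
    intro m
    rw [show -a (m + 1) - -a m = -(a (m + 1) - a m) from by ring, abs_neg]
    exact hJ m
  obtain ⟨m, hm⟩ := exists_near hJ' (by simp [h0]) ha' (D := -D) (by linarith)
  refine ⟨m, ?_⟩
  rw [show a m - D = -(-a m - -D) from by ring, abs_neg]
  exact hm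

lemma wordEquiv_of_boundary {f : G → ℝ} (hf1 : f 1 = 0) {B₀ : Set G} {z u : ℕ → G}
    (hs : wsign f z = wsign f u) (hadm : wsign f u = 1 ∨ wsign f u = -1)
    {J : ℝ} (hJ0 : 0 < J) (hJ : ∀ m, |f (prefixProd u (m + 1)) - f (prefixProd u m)| ≤ J)
    (hbd : ∀ m, ∃ k, prefixProd z k = prefixProd u m) :
    WordEquiv f B₀ z u := by
  refine ⟨hs, J, hJ0, ?_⟩
  intro D hD
  rw [hs] at hD
  have h0 : f (prefixProd u 0) = 0 := hf1
  have hDm : ∃ m, |f (prefixProd u m) - D| ≤ J := by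
    rcases hadm with h1 | h1
    · rw [h1] at hD
      norm_num at hD
      exact exists_near hJ h0 ((wsign_eq_one_iff f u).1 h1) (lt_trans hJ0 hD)
    · rw [h1] at hD
      push_cast at hD
      exact exists_near_bot hJ h0 ((wsign_eq_neg_one_iff f u).1 h1) (by linarith)
  obtain ⟨m, hm⟩ := hDm
  obtain ⟨k, hk⟩ := hbd m
  refine ⟨k, m, [], by simp, by simpa using hk, ?_⟩
  intro j hj
  simp only [Nat.le_zero, List.length_nil] at hj
  subst hj
  simpa [hk] using hm

lemma exists_bounds {A : Set G} (hA : A.Finite) (τ : G → List G) (f : G → ℝ) :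
    ∃ (M : ℝ) (Λ : ℕ), 0 ≤ M ∧ 1 ≤ Λ ∧
      (∀ s ∈ A, ∀ r, |f (((τ s).take r).prod)| ≤ M) ∧ (∀ s ∈ A, (τ s).length ≤ Λ) := by
  obtain ⟨Λ₀, hΛ₀⟩ := (hA.image fun s => (τ s).length).bddAbove
  have hV : (⋃ s ∈ A, (fun r => ((τ s).take r).prod) '' Set.Iic (τ s).length).Finite :=
    hA.biUnion fun s _ => (Set.finite_Iic _).image _
  obtain ⟨M₀, hM₀⟩ := (hV.image fun g => |f g|).bddAbove
  refine ⟨max M₀ 0, max Λ₀ 1, le_max_right _ _, le_max_right _ _, ?_, fun s hs =>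
    le_trans (hΛ₀ (Set.mem_image_of_mem _ hs)) (le_max_left _ _)⟩
  intro s hs r
  have hmem : ((τ s).take r).prod ∈ ⋃ s ∈ A, (fun r => ((τ s).take r).prod) '' Set.Iic (τ s).length := by
    rcases le_or_gt r (τ s).length with h | h
    · exact Set.mem_biUnion hs ⟨r, Set.mem_Iic.mpr h, rfl⟩
    · exact Set.mem_biUnion hs ⟨(τ s).length, Set.mem_Iic.mpr le_rfl, by
        simp only [List.take_length, List.take_of_length_le h.le]⟩
  exact le_trans (hM₀ (Set.mem_image_of_mem _ hmem)) (le_max_left _ _)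

lemma mem_letters {A : Set G} {x : G} : x ∈ letters A ↔ x ∈ A ∨ x⁻¹ ∈ A := by
  simp [letters, Set.mem_union, Set.mem_inv]

lemma exists_rep {S : Finset G} (hS : Subgroup.closure (S : Set G) = ⊤) {s₀ : G}
    (hs₀ : s₀ ∈ S) (t : G) :
    ∃ l : List G, l ≠ [] ∧ (∀ x ∈ l, x ∈ letters (S : Set G)) ∧ l.prod = t := by
  have ht : t ∈ Submonoid.closure ((S : Set G) ∪ (S : Set G)⁻¹) := by
    have h1 : t ∈ Subgroup.closure (S : Set G) := hS ▸ Subgroup.mem_top t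
    rwa [← Subgroup.mem_toSubmonoid, Subgroup.closure_toSubmonoid] at h1
  obtain ⟨l, hl1, hl2⟩ := Submonoid.exists_list_of_mem_closure ht
  refine ⟨l ++ [s₀, s₀⁻¹], by simp, ?_, by simp [hl2]⟩
  intro x hx
  rcases List.mem_append.mp hx with h | h
  · exact hl1 x h
  · simp only [List.mem_cons, List.mem_singleton, List.not_mem_nil, or_false] at h
    rcases h with rfl | rfl
    · exact mem_letters.mpr (Or.inl (by exact_mod_cast hs₀))
    · exact mem_letters.mpr (Or.inr (by simpa using (show s₀ ∈ (S : Set G) from hs₀)))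

lemma isWord_infConcat {τ : G → List G} {w : ℕ → G} {A B : Set G}
    (hw : IsWord A w)
    (hτ : ∀ s ∈ letters A, τ s ≠ [] ∧ (∀ x ∈ τ s, x ∈ letters B) ∧ (τ s).prod = s) :
    IsWord B (infConcat τ w) := by
  intro n
  have hne : ∀ i, τ (w i) ≠ [] := fun i => (hτ _ (hw i)).1
  have hn : n < (blocks τ w (n + 1)).length :=
    lt_of_lt_of_le (Nat.lt_succ_self n) (length_blocks_ge hne _)
  rw [infConcat_eq_getD hne hn, List.getD_eq_getElem _ _ hn]
  have hmem : (blocks τ w (n + 1))[n] ∈ blocks τ w (n + 1) := List.getElem_mem _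
  obtain ⟨i, _, hx⟩ := List.mem_flatMap.mp hmem
  exact (hτ _ (hw i)).2.1 _ hx

end EndsAux

/-- **Lemma (Manning, Section 2.3, Corollary 2.17).** Change of generating sets: if
for each letter `s ∈ S ∪ S⁻¹` we choose a nonempty word `τ(s)` in `T ∪ T⁻¹`
representing `s`, then `[w] ↦ [τ(w)]` is a well-defined bijection from `E(f,S)` to
`E(f,T)` carrying `E(f,S)⁺` to `E(f,T)⁺` and `E(f,S)⁻` to `E(f,T)⁻`. -/
theorem ends_change_of_generators
    {G : Type*} [Group G] (hGfp : IsFinitelyPresented G)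
    (f : G → ℝ) (hf : IsPseudochar f)
    (S T : Finset G)
    (hS : Subgroup.closure (S : Set G) = ⊤) (hT : Subgroup.closure (T : Set G) = ⊤)
    (τ : G → List G)
    (hτ : ∀ s ∈ letters (S : Set G),
      τ s ≠ [] ∧ (∀ x ∈ τ s, x ∈ letters (T : Set G)) ∧ (τ s).prod = s) :
    (∀ w : ℕ → G, IsWord (S : Set G) w → wsign f (infConcat τ w) = wsign f w) ∧
    ∃ Φ : Ends f (S : Set G) → Ends f (T : Set G),
      Function.Bijective Φ ∧
      (∀ (w : AdmWord f (S : Set G))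
        (h : IsWord (T : Set G) (infConcat τ w.1) ∧
          (wsign f (infConcat τ w.1) = 1 ∨ wsign f (infConcat τ w.1) = -1)),
        Φ (endClass f (S : Set G) w) = endClass f (T : Set G) ⟨infConcat τ w.1, h⟩) ∧
      Φ '' EndsPos f (S : Set G) = EndsPos f (T : Set G) ∧
      Φ '' EndsNeg f (S : Set G) = EndsNeg f (T : Set G) := by
  classical
  obtain ⟨hhom, C₀, hC⟩ := hf
  have hC₀ : 0 ≤ C₀ := le_trans (abs_nonneg _) (hC 1 1)
  have hf1 : f 1 = 0 := by
    have := hhom 1 0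
    simpa using this
  rcases subsingleton_or_nontrivial G with hsub | hnt
  · -- degenerate case: G is trivial
    have hfg : ∀ g : G, f g = 0 := fun g => by rw [Subsingleton.elim g 1, hf1]
    have hws : ∀ u : ℕ → G, wsign f u = 0 := by
      intro u
      apply EndsAux.wsign_eq_zero
      · intro h
        obtain ⟨n, hn⟩ := (h.eventually_ge_atTop 1).exists
        rw [hfg] at hn; linarith
      · intro h
        obtain ⟨n, hn⟩ := (h.eventually_le_atBot (-1)).exists
        rw [hfg] at hn; linarith
    have hAS : IsEmpty (AdmWord f (S : Set G)) :=
      ⟨fun w => by rcases w.2.2 with h | h <;> rw [hws] at h <;> exact absurd h (by decide)⟩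
    have hAT : IsEmpty (AdmWord f (T : Set G)) :=
      ⟨fun w => by rcases w.2.2 with h | h <;> rw [hws] at h <;> exact absurd h (by decide)⟩
    have hES : IsEmpty (Ends f (S : Set G)) :=
      ⟨fun x => @Quot.ind _ _ (fun _ => False) (fun w => hAS.false w) x⟩
    have hET : IsEmpty (Ends f (T : Set G)) :=
      ⟨fun x => @Quot.ind _ _ (fun _ => False) (fun w => hAT.false w) x⟩
    refine ⟨fun w _ => by rw [hws, hws], fun x => (hES.false x).elim, ?_, ?_, ?_, ?_⟩
    · exact ⟨fun a => (hES.false a).elim, fun y => (hET.false y).elim⟩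
    · intro w h
      exact (hES.false (endClass f _ w)).elim
    · ext y; exact (hET.false y).elim
    · ext y; exact (hET.false y).elim
  · -- main case
    have hSne : (S : Set G).Nonempty := by
      rcases Set.eq_empty_or_nonempty (S : Set G) with h | h
      · exfalso
        rw [h, Subgroup.closure_empty] at hS
        obtain ⟨a, b, hab⟩ := exists_pair_ne G
        apply hab
        have ha : a ∈ (⊥ : Subgroup G) := hS ▸ Subgroup.mem_top a
        have hb : b ∈ (⊥ : Subgroup G) := hS ▸ Subgroup.mem_top b
        rw [Subgroup.mem_bot] at ha hb
        rw [ha, hb]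
      · exact h
    obtain ⟨s₀, hs₀⟩ := hSne
    have hSfin : (letters (S : Set G)).Finite := S.finite_toSet.union S.finite_toSet.inv
    have hTfin : (letters (T : Set G)).Finite := T.finite_toSet.union T.finite_toSet.inv
    obtain ⟨Mτ, Λτ, hMτ0, hΛτ1, hMτ, hΛτ⟩ := EndsAux.exists_bounds hSfin τ f
    have hσex : ∀ t : G, ∃ l : List G, l ≠ [] ∧ (∀ x ∈ l, x ∈ letters (S : Set G)) ∧
        l.prod = t := EndsAux.exists_rep hS hs₀
    choose σ hσ1 hσ2 hσ3 using hσex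
    have hσ : ∀ t ∈ letters (T : Set G), σ t ≠ [] ∧ (∀ x ∈ σ t, x ∈ letters (S : Set G)) ∧
        (σ t).prod = t := fun t _ => ⟨hσ1 t, hσ2 t, hσ3 t⟩
    obtain ⟨Mσ, Λσ, hMσ0, hΛσ1, hMσ, hΛσ⟩ := EndsAux.exists_bounds hTfin σ f
    have keyS : ∀ w : ℕ → G, IsWord (S : Set G) w → wsign f (infConcat τ w) = wsign f w :=
      fun w hw => EndsAux.wsign_infConcat_eq hC (fun i => (hτ _ (hw i)).1)
        (fun i => (hτ _ (hw i)).2.2) (fun i r => hMτ _ (hw i) r) (fun i => hΛτ _ (hw i)) hΛτ1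
    have keyT : ∀ u : ℕ → G, IsWord (T : Set G) u → wsign f (infConcat σ u) = wsign f u :=
      fun u hu => EndsAux.wsign_infConcat_eq hC (fun i => (hσ _ (hu i)).1)
        (fun i => (hσ _ (hu i)).2.2) (fun i r => hMσ _ (hu i) r) (fun i => hΛσ _ (hu i)) hΛσ1
    refine ⟨keyS, ?_⟩
    have hfsS : ∀ s ∈ letters (S : Set G), |f s| ≤ Mτ := by
      intro s hs
      have := hMτ s hs (τ s).length
      rwa [List.take_length, (hτ s hs).2.2] at this
    have hfsT : ∀ t ∈ letters (T : Set G), |f t| ≤ Mσ := by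
      intro t ht
      have := hMσ t ht (σ t).length
      rwa [List.take_length, (hσ t ht).2.2] at this
    let F : AdmWord f (S : Set G) → AdmWord f (T : Set G) := fun w =>
      ⟨infConcat τ w.1, EndsAux.isWord_infConcat w.2.1 hτ, by
        rw [keyS w.1 w.2.1]; exact w.2.2⟩
    let Gm : AdmWord f (T : Set G) → AdmWord f (S : Set G) := fun u =>
      ⟨infConcat σ u.1, EndsAux.isWord_infConcat u.2.1 hσ, by
        rw [keyT u.1 u.2.1]; exact u.2.2⟩
    have hFval : ∀ w, (F w).1 = infConcat τ w.1 := fun w => rfl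
    have hGmval : ∀ u, (Gm u).1 = infConcat σ u.1 := fun u => rfl
    let Φ : Ends f (S : Set G) → Ends f (T : Set G) :=
      Quot.lift (fun w => Quot.mk _ (F w)) (fun a b h => Quot.sound (by
        rw [hFval, hFval]
        exact EndsAux.wordEquiv_map hC hC₀ hτ hMτ hMτ0 a.2.1 b.2.1
          (keyS a.1 a.2.1) (keyS b.1 b.2.1) h))
    let Ψ : Ends f (T : Set G) → Ends f (S : Set G) :=
      Quot.lift (fun u => Quot.mk _ (Gm u)) (fun a b h => Quot.sound (by
        rw [hGmval, hGmval]
        exact EndsAux.wordEquiv_map hC hC₀ hσ hMσ hMσ0 a.2.1 b.2.1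
          (keyT a.1 a.2.1) (keyT b.1 b.2.1) h))
    have hΦmk : ∀ w : AdmWord f (S : Set G),
        Φ (Quot.mk (fun a b : AdmWord f (S : Set G) => WordEquiv f (S : Set G) a.1 b.1) w) =
          Quot.mk (fun a b : AdmWord f (T : Set G) => WordEquiv f (T : Set G) a.1 b.1) (F w) :=
      fun _ => rfl
    have hΨmk : ∀ u : AdmWord f (T : Set G),
        Ψ (Quot.mk (fun a b : AdmWord f (T : Set G) => WordEquiv f (T : Set G) a.1 b.1) u) =
          Quot.mk (fun a b : AdmWord f (S : Set G) => WordEquiv f (S : Set G) a.1 b.1) (Gm u) :=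
      fun _ => rfl
    have hΨΦ : ∀ x, Ψ (Φ x) = x := by
      refine fun x => @Quot.ind _ _ (fun x => Ψ (Φ x) = x) ?_ x
      intro w
      have hround : WordEquiv f (S : Set G) (infConcat σ (infConcat τ w.1)) w.1 := ?_
      · rw [hΦmk, hΨmk]
        exact Quot.sound hround
      have hwT : IsWord (T : Set G) (infConcat τ w.1) := EndsAux.isWord_infConcat w.2.1 hτ
      refine EndsAux.wordEquiv_of_boundary hf1 ?_ w.2.2 (J := Mτ + C₀ + 1) (by linarith) ?_ ?_
      · rw [keyT _ hwT, keyS _ w.2.1]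
      · intro m
        have hstep : prefixProd w.1 (m + 1) = prefixProd w.1 m * w.1 m := rfl
        rw [hstep]
        have h1 := EndsAux.defect_jump hC (prefixProd w.1 m) (w.1 m)
        have h2 := hfsS (w.1 m) (w.2.1 m)
        linarith
      · intro m
        have hnew : ∀ i, τ (w.1 i) ≠ [] := fun i => (hτ _ (w.2.1 i)).1
        have hprw : ∀ i, (τ (w.1 i)).prod = w.1 i := fun i => (hτ _ (w.2.1 i)).2.2
        have hneσ : ∀ i, σ (infConcat τ w.1 i) ≠ [] := fun i => hσ1 _
        have hprσ : ∀ i, (σ (infConcat τ w.1 i)).prod = infConcat τ w.1 i := fun i => hσ3 _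
        refine ⟨(EndsAux.blocks σ (infConcat τ w.1)
          ((EndsAux.blocks τ w.1 m).length)).length, ?_⟩
        rw [EndsAux.prefixProd_infConcat_boundary hneσ hprσ,
          EndsAux.prefixProd_infConcat_boundary hnew hprw]
    have hΦΨ : ∀ y, Φ (Ψ y) = y := by
      refine fun y => @Quot.ind _ _ (fun y => Φ (Ψ y) = y) ?_ y
      intro u
      have hround : WordEquiv f (T : Set G) (infConcat τ (infConcat σ u.1)) u.1 := ?_
      · rw [hΨmk, hΦmk]
        exact Quot.sound hround
      have huS : IsWord (S : Set G) (infConcat σ u.1) := EndsAux.isWord_infConcat u.2.1 hσ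
      refine EndsAux.wordEquiv_of_boundary hf1 ?_ u.2.2 (J := Mσ + C₀ + 1) (by linarith) ?_ ?_
      · rw [keyS _ huS, keyT _ u.2.1]
      · intro m
        have hstep : prefixProd u.1 (m + 1) = prefixProd u.1 m * u.1 m := rfl
        rw [hstep]
        have h1 := EndsAux.defect_jump hC (prefixProd u.1 m) (u.1 m)
        have h2 := hfsT (u.1 m) (u.2.1 m)
        linarith
      · intro m
        have hneu : ∀ i, σ (u.1 i) ≠ [] := fun i => (hσ _ (u.2.1 i)).1
        have hpru : ∀ i, (σ (u.1 i)).prod = u.1 i := fun i => (hσ _ (u.2.1 i)).2.2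
        have hneτ : ∀ i, τ (infConcat σ u.1 i) ≠ [] := fun i => (hτ _ (huS i)).1
        have hprτ : ∀ i, (τ (infConcat σ u.1 i)).prod = infConcat σ u.1 i :=
          fun i => (hτ _ (huS i)).2.2
        refine ⟨(EndsAux.blocks τ (infConcat σ u.1)
          ((EndsAux.blocks σ u.1 m).length)).length, ?_⟩
        rw [EndsAux.prefixProd_infConcat_boundary hneτ hprτ,
          EndsAux.prefixProd_infConcat_boundary hneu hpru]
    refine ⟨Φ, ⟨Function.LeftInverse.injective hΨΦ,
      Function.RightInverse.surjective hΦΨ⟩, ?_, ?_, ?_⟩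
    · intro w h
      show Quot.mk _ (F w) = Quot.mk _ (⟨infConcat τ w.1, h⟩ : AdmWord f (T : Set G))
      exact congrArg _ (Subtype.ext rfl)
    · ext y
      constructor
      · rintro ⟨x, ⟨w, hw1, rfl⟩, rfl⟩
        refine ⟨F w, ?_, rfl⟩
        show wsign f (infConcat τ w.1) = 1
        rw [keyS w.1 w.2.1, hw1]
      · rintro ⟨u, hu1, rfl⟩
        refine ⟨Ψ (endClass f (T : Set G) u), ⟨Gm u, ?_, rfl⟩, hΦΨ (endClass f (T : Set G) u)⟩
        show wsign f (infConcat σ u.1) = 1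
        rw [keyT u.1 u.2.1, hu1]
    · ext y
      constructor
      · rintro ⟨x, ⟨w, hw1, rfl⟩, rfl⟩
        refine ⟨F w, ?_, rfl⟩
        show wsign f (infConcat τ w.1) = -1
        rw [keyS w.1 w.2.1, hw1]
      · rintro ⟨u, hu1, rfl⟩
        refine ⟨Ψ (endClass f (T : Set G) u), ⟨Gm u, ?_, rfl⟩, hΦΨ (endClass f (T : Set G) u)⟩
        show wsign f (infConcat σ u.1) = -1
        rw [keyT u.1 u.2.1, hu1]
end

section
/- Let g ∈ G with f(g) > 0 and let u = u₁…u_m be any finite word in S ∪ S⁻¹ representing g. Then for the periodic infinite word u^∞ = uuu…, the prefix products satisfy lim_{k→∞} f(pₖ(u^∞)) = +∞, so that σ(u^∞) = +1 and u^∞ determines an element of E(f,S)⁺. Moreover, the class of u^∞ in E(f,S) does not depend on the choice of the word u representing g. -/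
open Filter

variable {G : Type*} [Group G]

/-- The periodic infinite word `u^∞ = uuu…` determined by a finite word `u`. -/
def periodicWord (u : List G) : ℕ → G := fun i => u.getD (i % u.length) 1

lemma prefixProd_periodic {G : Type*} [Group G] (u : List G) (hu : u ≠ []) (k : ℕ) :
    prefixProd (periodicWord u) k =
      u.prod ^ (k / u.length) * (u.take (k % u.length)).prod := by
  have hm : 0 < u.length := List.length_pos_iff.mpr hu
  induction k with
  | zero => simp [prefixProd]
  | succ k ih =>
    have hr : k % u.length < u.length := Nat.mod_lt _ hm
    have hdm := Nat.div_add_mod k u.length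
    show prefixProd (periodicWord u) k * periodicWord u k = _
    rw [ih]
    show _ * u.getD (k % u.length) 1 = _
    rw [List.getD_eq_getElem _ _ hr, mul_assoc, ← List.prod_take_succ u _ hr]
    rcases eq_or_lt_of_le (Nat.succ_le_of_lt hr) with h | h
    · rw [Nat.succ_eq_add_one] at h
      have e : k + 1 = u.length * (k / u.length + 1) := by rw [Nat.mul_succ]; omega
      have h1 : (k+1) % u.length = 0 := by rw [e]; exact Nat.mul_mod_right _ _
      have h2 : (k+1) / u.length = k / u.length + 1 := by
        rw [e]; exact Nat.mul_div_cancel_left _ hm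
      rw [h1, h2, h, List.take_length, pow_succ, List.take_zero, List.prod_nil, mul_one]
    · have e : k + 1 = (k % u.length + 1) + u.length * (k / u.length) := by omega
      have h1 : (k+1) % u.length = k % u.length + 1 := by
        rw [e, Nat.add_mul_mod_self_left, Nat.mod_eq_of_lt h]
      have h2 : (k+1) / u.length = k / u.length := by
        rw [e, Nat.add_mul_div_left _ _ hm, Nat.div_eq_of_lt h, zero_add]
      rw [h1, h2]

/-- **Remark (Manning, Remark 3.6).** If `f(g) > 0` and `u` is a nonempty word in
the letters of `S` representing `g`, then `f(pₖ(u^∞)) → +∞`, so `σ(u^∞) = +1` and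
`u^∞` determines an element of `E(f,S)⁺`; moreover the class of `u^∞` in `E(f,S)`
does not depend on the choice of the representing word `u`. -/
theorem periodic_word_positive_and_well_defined
    {G : Type*} [Group G] (hGfp : IsFinitelyPresented G)
    (f : G → ℝ) (hf : IsPseudochar f)
    (S : Finset G) (hS : Subgroup.closure (S : Set G) = ⊤)
    (g : G) (hg : 0 < f g) :
    (∀ u : List G, u ≠ [] → (∀ x ∈ u, x ∈ letters (S : Set G)) → u.prod = g →
      Filter.Tendsto (fun k => f (prefixProd (periodicWord u) k)) Filter.atTop Filter.atTop ∧
      wsign f (periodicWord u) = 1) ∧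
    (∀ u u' : List G, u ≠ [] → u' ≠ [] →
      (∀ x ∈ u, x ∈ letters (S : Set G)) → (∀ x ∈ u', x ∈ letters (S : Set G)) →
      u.prod = g → u'.prod = g →
      WordEquiv f (S : Set G) (periodicWord u) (periodicWord u')) := by
  obtain ⟨hhom, Cd, hCd⟩ := hf
  have hpow : ∀ (x : G) (n : ℕ), f (x ^ n) = (n : ℝ) * f x := by
    intro x n
    have := hhom x (n : ℤ)
    rw [zpow_natCast] at this
    exact_mod_cast this
  have P1 : ∀ u : List G, u ≠ [] → (∀ x ∈ u, x ∈ letters (S : Set G)) → u.prod = g →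
      Filter.Tendsto (fun k => f (prefixProd (periodicWord u) k)) Filter.atTop Filter.atTop ∧
      wsign f (periodicWord u) = 1 := by
    intro u hu _ hup
    have hm : 0 < u.length := List.length_pos_iff.mpr hu
    obtain ⟨B, hB⟩ : ∃ B : ℝ, ∀ r < u.length, |f ((u.take r).prod)| ≤ B := by
      classical
      refine ⟨(Finset.range u.length).sup' ⟨0, Finset.mem_range.mpr hm⟩
        (fun r => |f ((u.take r).prod)|), fun r hr => ?_⟩
      exact Finset.le_sup' (fun r => |f ((u.take r).prod)|) (Finset.mem_range.mpr hr)
    have key : ∀ k, ((k / u.length : ℕ) : ℝ) * f g - (B + Cd) ≤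
        f (prefixProd (periodicWord u) k) := by
      intro k
      rw [prefixProd_periodic u hu k]
      have h1 := hCd (u.prod ^ (k / u.length)) ((u.take (k % u.length)).prod)
      have h2 : f (u.prod ^ (k / u.length)) = ((k / u.length : ℕ) : ℝ) * f g := by
        rw [hpow, hup]
      have h3 := hB (k % u.length) (Nat.mod_lt _ hm)
      rw [h2] at h1
      have h4 := abs_le.mp h1
      have h5 := abs_le.mp h3
      linarith [h4.1, h4.2, h5.1, h5.2]
    have hdiv : Tendsto (fun k => k / u.length) atTop atTop := by
      refine tendsto_atTop_atTop.mpr fun b => ⟨b * u.length, fun k hk => ?_⟩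
      exact (Nat.le_div_iff_mul_le hm).mpr hk
    have hT : Tendsto (fun k => ((k / u.length : ℕ) : ℝ) * f g - (B + Cd)) atTop atTop := by
      have h1 : Tendsto (fun k => ((k / u.length : ℕ) : ℝ)) atTop atTop :=
        tendsto_natCast_atTop_atTop.comp hdiv
      have h2 := h1.atTop_mul_const hg
      simpa [sub_eq_add_neg] using tendsto_atTop_add_const_right atTop (-(B + Cd)) h2
    have hTend : Filter.Tendsto (fun k => f (prefixProd (periodicWord u) k))
        Filter.atTop Filter.atTop :=
      tendsto_atTop_mono key hT
    refine ⟨hTend, ?_⟩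
    simp [wsign, hTend]
  refine ⟨P1, ?_⟩
  intro u u' hu hu' hux hux' hup hup'
  have hw := (P1 u hu hux hup).2
  have hv := (P1 u' hu' hux' hup').2
  refine ⟨hw.trans hv.symm, f g + 1, by linarith, ?_⟩
  intro D hD
  rw [hw] at hD
  push_cast at hD
  rw [one_mul] at hD
  have hD0 : 0 < D := by linarith
  set q : ℕ := ⌊D / f g⌋₊ with hq
  have hq1 : (q : ℝ) * f g ≤ D := by
    have := Nat.floor_le (le_of_lt (div_pos hD0 hg))
    calc (q : ℝ) * f g ≤ (D / f g) * f g :=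
          mul_le_mul_of_nonneg_right this (le_of_lt hg)
      _ = D := div_mul_cancel₀ D (ne_of_gt hg)
  have hq2 : D < ((q : ℝ) + 1) * f g := by
    have := Nat.lt_floor_add_one (D / f g)
    calc D = (D / f g) * f g := (div_mul_cancel₀ D (ne_of_gt hg)).symm
      _ < ((q : ℝ) + 1) * f g := mul_lt_mul_of_pos_right this hg
  have hgq : ∀ (v : List G), v ≠ [] →
      prefixProd (periodicWord v) (q * v.length) = v.prod ^ q := by
    intro v hv
    have hmv : 0 < v.length := List.length_pos_iff.mpr hv
    rw [prefixProd_periodic v hv, Nat.mul_div_cancel q hmv, Nat.mul_mod_left,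
      List.take_zero, List.prod_nil, mul_one]
  refine ⟨q * u.length, q * u'.length, [], by simp, ?_, ?_⟩
  · rw [hgq u hu, hgq u' hu', hup, hup', List.prod_nil, mul_one]
  · intro j hj
    simp only [List.length_nil, Nat.le_zero] at hj
    subst hj
    rw [hgq u hu, hup]
    simp only [List.take_nil, List.prod_nil, mul_one]
    rw [hpow g q, abs_le]
    constructor <;> nlinarith
end

section
/- The Farey graph F is connected and has infinite diameter: any two vertices of F are joined by a path, and for every n ∈ ℕ there exist vertices x and y of F whose graph distance satisfies d(x,y) > n. In particular, the orbit of any vertex of F under the group of graph automorphisms of F has infinite diameter. -/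
/-- The numerator of a vertex of the Farey graph (`∞ = 1/0` is `none`). -/
def fnum : Option ℚ → ℤ
  | none => 1
  | some x => x.num

/-- The denominator of a vertex of the Farey graph (`∞ = 1/0` is `none`). -/
def fden : Option ℚ → ℤ
  | none => 0
  | some x => (x.den : ℤ)

/-- The Farey graph: vertices are `ℚ ∪ {∞}`, with `p/q` and `r/s` (in lowest terms)
adjacent iff `ps - qr = ±1`. -/
def fareyGraph : SimpleGraph (Option ℚ) where
  Adj x y := x ≠ y ∧
    (fnum x * fden y - fden x * fnum y = 1 ∨ fnum x * fden y - fden x * fnum y = -1)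
  symm := ⟨by
    rintro x y ⟨hxy, h | h⟩
    · exact ⟨hxy.symm, Or.inr (by linear_combination -h)⟩
    · exact ⟨hxy.symm, Or.inl (by linear_combination -h)⟩⟩
  loopless := ⟨fun x h => h.1 rfl⟩

lemma fden_nonneg (v : Option ℚ) : 0 ≤ fden v := by
  cases v <;> simp [fden]

lemma fcoprime (v : Option ℚ) : IsCoprime (fnum v) (fden v) := by
  cases v with
  | none => exact isCoprime_one_left
  | some x =>
    rw [Int.isCoprime_iff_gcd_eq_one]
    exact x.reduced

lemma fden_eq_zero {v : Option ℚ} (h : fden v = 0) : v = none := by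
  cases v with
  | none => rfl
  | some x => simp [fden] at h

lemma vertex_ext {v w : Option ℚ} (h1 : fnum v = fnum w) (h2 : fden v = fden w) : v = w := by
  cases v with
  | none => exact (fden_eq_zero (h2.symm.trans (by simp [fden] : fden (none : Option ℚ) = 0))).symm
  | some x =>
    cases w with
    | none =>
      exfalso
      have : fden (some x) = 0 := h2.trans (by simp [fden] : fden (none : Option ℚ) = 0)
      simpa using fden_eq_zero this
    | some y =>
      simp [fnum, fden] at h1 h2
      exact congrArg _ (Rat.ext h1 h2)

lemma coords_div {p q : ℤ} (hq : 0 < q) (h : IsCoprime p q) :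
    fnum (some ((p : ℚ) / q)) = p ∧ fden (some ((p : ℚ) / q)) = q := by
  have hc : Nat.Coprime p.natAbs q.natAbs := Int.isCoprime_iff_gcd_eq_one.mp h
  exact ⟨Rat.num_div_eq_of_coprime hq hc, Rat.den_div_eq_of_coprime hq hc⟩

lemma adj_of_cross {v w : Option ℚ}
    (h : fnum v * fden w - fden v * fnum w = 1 ∨ fnum v * fden w - fden v * fnum w = -1) :
    fareyGraph.Adj v w := by
  refine (⟨?_, h⟩ : v ≠ w ∧ _)
  rintro rfl
  have h0 : fnum v * fden v - fden v * fnum v = 0 := by ring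
  rcases h with h | h <;> omega

lemma reachable_none_aux : ∀ n : ℕ, ∀ x : ℚ, x.den = n → fareyGraph.Reachable none (some x) := by
  intro n
  induction n using Nat.strong_induction_on with
  | _ n ih =>
    intro x hx
    have hd1 : 1 ≤ x.den := x.den_pos
    rcases eq_or_lt_of_le hd1 with h1 | h2
    · -- integer: adjacent to ∞
      refine (adj_of_cross ?_).reachable
      simp only [fnum, fden]
      left; rw [← h1]; ring
    · -- den ≥ 2
      obtain ⟨u, v, huv⟩ := fcoprime (some x)
      simp only [fnum, fden] at huv
      set p : ℤ := x.num with hp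
      set q : ℤ := (x.den : ℤ) with hq
      have hq0 : 0 < q := by positivity
      have hq2 : 2 ≤ q := by
        have : (1:ℤ) < q := by rw [hq]; exact_mod_cast h2
        omega
      set s : ℤ := u % q with hs
      have hs0 : 0 ≤ s := Int.emod_nonneg u hq0.ne'
      have hsq : s < q := Int.emod_lt_of_pos u hq0
      have hdvd : q ∣ p * s - 1 := by
        have : p * s - 1 = p * u - 1 - p * q * (u / q) := by
          rw [hs, Int.emod_def]; ring
        rw [this]
        have h1 : p * u - 1 = -(v * q) := by linarith [huv]
        rw [h1]
        exact dvd_sub ⟨-v, by ring⟩ ⟨p * (u / q), by ring⟩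
      have hsne : s ≠ 0 := by
        intro h0
        rw [h0, mul_zero, zero_sub] at hdvd
        have := Int.le_of_dvd (by norm_num) (dvd_neg.mp hdvd)
        omega
      have hs1 : 0 < s := lt_of_le_of_ne hs0 (Ne.symm hsne)
      obtain ⟨r, hr⟩ := hdvd
      have key : p * s - q * r = 1 := by linarith [hr]
      have hcop : IsCoprime r s := ⟨-q, p, by linarith [key]⟩
      have hcoords := coords_div hs1 hcop
      set y : ℚ := (r : ℚ) / s with hy
      have hadj : fareyGraph.Adj (some y) (some x) := by
        apply adj_of_cross
        right
        show fnum (some y) * fden (some x) - fden (some y) * fnum (some x) = -1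
        rw [hcoords.1, hcoords.2]
        simp only [fnum, fden]
        rw [← hp, ← hq]
        linarith [key]
      have hyden : (y.den : ℤ) = s := hcoords.2
      have hylt : y.den < n := by
        have h3 : (y.den : ℤ) < (x.den : ℤ) := by rw [hyden]; exact hsq
        have h4 : y.den < x.den := by exact_mod_cast h3
        omega
      exact (ih y.den hylt y rfl).trans hadj.reachable

lemma reachable_none (v : Option ℚ) : fareyGraph.Reachable none v := by
  cases v with
  | none => exact SimpleGraph.Reachable.refl _
  | some x => exact reachable_none_aux x.den x rfl

lemma farey_connected : fareyGraph.Connected := by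
  rw [SimpleGraph.connected_iff]
  exact ⟨fun v w => (reachable_none v).symm.trans (reachable_none w), ⟨none⟩⟩


def fz (n : ℕ) : ℤ := Nat.fib n

lemma fz_add_two (n : ℕ) : fz (n + 2) = fz n + fz (n + 1) := by
  unfold fz; push_cast [Nat.fib_add_two]; ring

lemma fz_pos {n : ℕ} (h : 1 ≤ n) : 0 < fz n := by
  unfold fz; exact_mod_cast Nat.fib_pos.mpr h

lemma cassini (n : ℕ) : fz n * fz (n + 2) - fz (n + 1) ^ 2 = (-1) ^ (n + 1) := by
  induction n with
  | zero => simp [fz]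
  | succ n ih =>
    have h2 := fz_add_two n
    have h3 := fz_add_two (n + 1)
    rw [pow_succ]
    rw [h2] at ih
    rw [h3, h2]
    linear_combination -ih

lemma twostep (n : ℕ) : fz n * fz (n + 3) - fz (n + 1) * fz (n + 2) = (-1) ^ (n + 1) := by
  have h2 := fz_add_two n
  have h3 := fz_add_two (n + 1)
  have hc := cassini n
  rw [show n + 3 = (n + 1) + 2 from rfl, h3]
  linear_combination hc - fz (n + 1) * h2

def xv (j : ℕ) : ℚ := (fz j : ℚ) / (fz (j + 1) : ℚ)

lemma xv_lt_iff {i j : ℕ} : xv i < xv j ↔ fz i * fz (j + 1) < fz j * fz (i + 1) := by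
  unfold xv
  rw [div_lt_div_iff₀ (by exact_mod_cast fz_pos (by omega)) (by exact_mod_cast fz_pos (by omega))]
  exact_mod_cast Iff.rfl

lemma xv_lt_adj {j : ℕ} (h : Even j) : xv j < xv (j + 1) := by
  rw [xv_lt_iff]
  have hc := cassini j
  have : (-1 : ℤ) ^ (j + 1) = -1 := (h.add_one).neg_one_pow
  nlinarith [hc]

lemma xv_lt_step2 {j : ℕ} (h : Even j) : xv j < xv (j + 2) := by
  rw [xv_lt_iff]
  have hc := twostep j
  have : (-1 : ℤ) ^ (j + 1) = -1 := (h.add_one).neg_one_pow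
  rw [this] at hc
  rw [show j + 2 + 1 = j + 3 from rfl]
  linarith [mul_comm (fz (j + 2)) (fz (j + 1))]

lemma xv_gt_step2 {j : ℕ} (h : Odd j) : xv (j + 2) < xv j := by
  rw [xv_lt_iff]
  have hc := twostep j
  have : (-1 : ℤ) ^ (j + 1) = 1 := (h.add_one).neg_one_pow
  rw [this] at hc
  rw [show j + 2 + 1 = j + 3 from rfl]
  linarith [mul_comm (fz (j + 2)) (fz (j + 1))]

lemma even_mono : StrictMono (fun m : ℕ => xv (2 * m)) := by
  apply strictMono_nat_of_lt_succ
  intro m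
  have := xv_lt_step2 (j := 2 * m) (even_two_mul m)
  simpa [show 2 * (m + 1) = 2 * m + 2 by ring] using this

lemma odd_anti : StrictAnti (fun m : ℕ => xv (2 * m + 1)) := by
  apply strictAnti_nat_of_succ_lt
  intro m
  have := xv_gt_step2 (j := 2 * m + 1) (odd_two_mul_add_one m)
  simpa [show 2 * (m + 1) + 1 = 2 * m + 1 + 2 by ring] using this

lemma even_lt_odd (i j : ℕ) : xv (2 * i) < xv (2 * j + 1) := by
  rcases le_or_gt i j with h | h
  · calc xv (2 * i) ≤ xv (2 * j) := even_mono.monotone (by omega)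
    _ < xv (2 * j + 1) := xv_lt_adj (even_two_mul j)
  · calc xv (2 * i) < xv (2 * i + 1) := xv_lt_adj (even_two_mul i)
    _ ≤ xv (2 * j + 1) := (odd_anti.antitone (by omega))

lemma xv_between {m t : ℕ} (h : 2 * m + 3 ≤ t) :
    xv (2 * m + 2) < xv t ∧ xv t < xv (2 * m + 1) := by
  rcases Nat.even_or_odd t with he | ho
  · obtain ⟨i, hi⟩ := he
    have hi' : t = 2 * i := by omega
    subst hi'
    constructor
    · have : xv (2 * (m + 1)) < xv (2 * i) := even_mono (by omega)
      simpa [show 2 * (m + 1) = 2 * m + 2 by ring] using this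
    · exact even_lt_odd i m
  · obtain ⟨i, hi⟩ := ho
    subst hi
    constructor
    · have := even_lt_odd (m + 1) i
      simpa [show 2 * (m + 1) = 2 * m + 2 by ring] using this
    · exact odd_anti (show m < i by omega)

lemma num_eq_mul_den (x : ℚ) : (x.num : ℚ) = x * (x.den : ℚ) := by
  have h := Rat.num_div_den x
  rw [div_eq_iff (by exact_mod_cast x.den_nz : ((x.den:ℚ) ≠ 0))] at h
  exact h

lemma sub_mul_den (x y : ℚ) :
    (y - x) * ((x.den : ℚ) * (y.den : ℚ)) = ((y.num * x.den - x.num * y.den : ℤ) : ℚ) := by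
  push_cast
  rw [num_eq_mul_den x, num_eq_mul_den y]
  ring

lemma gap_ge {x y : ℚ} (h : x < y) : 1 ≤ (y - x) * ((x.den : ℚ) * (y.den : ℚ)) := by
  rw [sub_mul_den]
  have h0 : (0 : ℚ) < ((y.num * x.den - x.num * y.den : ℤ) : ℚ) := by
    rw [← sub_mul_den]
    apply mul_pos (sub_pos.mpr h)
    have hx : (0:ℚ) < (x.den : ℚ) := by exact_mod_cast x.den_pos
    have hy : (0:ℚ) < (y.den : ℚ) := by exact_mod_cast y.den_pos
    positivity
  have h1 : (0 : ℤ) < y.num * x.den - x.num * y.den := by exact_mod_cast h0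
  exact_mod_cast h1

lemma adj_eq {x y : ℚ} (h : fareyGraph.Adj (some x) (some y)) (hlt : x < y) :
    (y - x) * ((x.den : ℚ) * (y.den : ℚ)) = 1 := by
  have hc := (show _ ∧ _ from h).2
  simp only [fnum, fden] at hc
  have hg := gap_ge hlt
  rw [sub_mul_den] at hg ⊢
  have h1 : (1 : ℤ) ≤ y.num * x.den - x.num * y.den := by exact_mod_cast hg
  have hN : y.num * x.den - x.num * y.den = -(x.num * (y.den:ℤ) - (x.den:ℤ) * y.num) := by ring
  rcases hc with hc | hc
  · rw [hc] at hN; omega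
  · rw [hc] at hN
    rw [hN]
    norm_num

lemma adj_none_den {z : ℚ} (h : fareyGraph.Adj (some z) none) : ((z.den : ℚ)) = 1 := by
  have hc := (show _ ∧ _ from h).2
  simp only [fnum, fden] at hc
  have : (z.den : ℤ) = 1 := by
    rcases hc with hc | hc <;> omega
  exact_mod_cast this

lemma no_crossing {a b z : ℚ} (hab : fareyGraph.Adj (some a) (some b)) (hab' : a < b)
    {w : Option ℚ} (hzw : fareyGraph.Adj (some z) w)
    (hz1 : a < z) (hz2 : z < b)
    (hw : w = none ∨ ∃ y : ℚ, w = some y ∧ (y < a ∨ b < y)) : False := by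
  set K : ℚ := (a.den : ℚ) with hK
  set T : ℚ := (b.den : ℚ) with hT
  set Q : ℚ := (z.den : ℚ) with hQd
  have hK1 : (1:ℚ) ≤ K := by rw [hK]; exact_mod_cast a.den_pos
  have hT1 : (1:ℚ) ≤ T := by rw [hT]; exact_mod_cast b.den_pos
  have hQ1 : (1:ℚ) ≤ Q := by rw [hQd]; exact_mod_cast z.den_pos
  have e1 : (b - a) * (K * T) = 1 := adj_eq hab hab'
  have g1 : 1 ≤ (z - a) * (K * Q) := gap_ge hz1
  have g3 : 1 ≤ (b - z) * (Q * T) := gap_ge hz2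
  -- K + T ≤ Q is derived in the finite-w cases; the none case is direct
  rcases hw with rfl | ⟨y, rfl, hy⟩
  · -- w = ∞ : z is an integer
    have hQ : Q = 1 := adj_none_den hzw
    rw [hQ, mul_one] at g1
    rw [hQ, one_mul] at g3
    nlinarith [mul_le_mul_of_nonneg_left g1 (by linarith : (0:ℚ) ≤ T),
      mul_le_mul_of_nonneg_left g3 (by linarith : (0:ℚ) ≤ K)]
  · set S : ℚ := (y.den : ℚ) with hS
    have hS1 : (1:ℚ) ≤ S := by rw [hS]; exact_mod_cast y.den_pos
    have hQbig : K + T ≤ Q := by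
      have e1Q : (b - a) * (K * T) * Q = Q := by rw [e1]; ring
      nlinarith [e1Q, mul_le_mul_of_nonneg_left g3 (by linarith : (0:ℚ) ≤ K),
        mul_le_mul_of_nonneg_left g1 (by linarith : (0:ℚ) ≤ T)]
    rcases hy with hy | hy
    · -- y < a
      have e2 : (z - y) * (S * Q) = 1 := adj_eq (hzw.symm) (by linarith)
      have g2 : 1 ≤ (a - y) * (S * K) := gap_ge hy
      have hKbig : Q + S ≤ K := by
        have e2K : (z - y) * (S * Q) * K = K := by rw [e2]; ring
        nlinarith [e2K, mul_le_mul_of_nonneg_left g1 (by linarith : (0:ℚ) ≤ S),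
          mul_le_mul_of_nonneg_left g2 (by linarith : (0:ℚ) ≤ Q)]
      linarith
    · -- b < y
      have e2 : (y - z) * (Q * S) = 1 := adj_eq hzw (by linarith)
      have g4 : 1 ≤ (y - b) * (T * S) := gap_ge hy
      have hTbig : Q + S ≤ T := by
        have e2T : (y - z) * (Q * S) * T = T := by rw [e2]; ring
        nlinarith [e2T, mul_le_mul_of_nonneg_left g4 (by linarith : (0:ℚ) ≤ Q),
          mul_le_mul_of_nonneg_left g3 (by linarith : (0:ℚ) ≤ S)]
      linarith

lemma xv_coords (j : ℕ) : fnum (some (xv j)) = fz j ∧ fden (some (xv j)) = fz (j + 1) := by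
  apply coords_div (fz_pos (by omega))
  rw [Int.isCoprime_iff_gcd_eq_one]
  simpa [fz, Int.gcd_natCast_natCast] using Nat.fib_coprime_fib_succ j

lemma edge_AB (m : ℕ) : fareyGraph.Adj (some (xv (2 * m + 2))) (some (xv (2 * m + 1))) := by
  apply adj_of_cross
  right
  rw [(xv_coords (2 * m + 2)).1, (xv_coords (2 * m + 2)).2,
    (xv_coords (2 * m + 1)).1, (xv_coords (2 * m + 1)).2]
  have hc := cassini (2 * m + 1)
  have hp : ((-1 : ℤ)) ^ (2 * m + 1 + 1) = 1 := Even.neg_one_pow ⟨m + 1, by ring⟩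
  rw [hp] at hc
  simp only [show 2 * m + 1 + 1 = 2 * m + 2 from by omega,
    show 2 * m + 2 + 1 = 2 * m + 3 from by omega,
    show 2 * m + 1 + 2 = 2 * m + 3 from by omega] at hc ⊢
  linear_combination -hc

def OutsideI (m : ℕ) (u : Option ℚ) : Prop :=
  u = none ∨ ∃ z : ℚ, u = some z ∧ (z < xv (2 * m + 2) ∨ xv (2 * m + 1) < z)

lemma crossing (m : ℕ) : ∀ {u v : Option ℚ} (w : fareyGraph.Walk u v),
    OutsideI m u → (∃ z : ℚ, v = some z ∧ xv (2 * m + 2) ≤ z ∧ z ≤ xv (2 * m + 1)) →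
    some (xv (2 * m + 1)) ∈ w.support ∨ some (xv (2 * m + 2)) ∈ w.support := by
  intro u v w
  induction w with
  | nil =>
    rintro hu ⟨z, rfl, hz1, hz2⟩
    rcases hu with h | ⟨z', hz', h⟩
    · exact absurd h (by simp)
    · exfalso
      obtain rfl : z = z' := by injection hz'
      rcases h with h | h <;> linarith
  | @cons u u' v h p ih =>
    intro hu hv
    by_cases hA : u' = some (xv (2 * m + 1))
    · left
      rw [SimpleGraph.Walk.support_cons]
      exact List.mem_cons_of_mem _ (hA ▸ p.start_mem_support)
    by_cases hB : u' = some (xv (2 * m + 2))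
    · right
      rw [SimpleGraph.Walk.support_cons]
      exact List.mem_cons_of_mem _ (hB ▸ p.start_mem_support)
    by_cases hO : OutsideI m u'
    · rcases ih hO hv with h1 | h1
      · left
        rw [SimpleGraph.Walk.support_cons]
        exact List.mem_cons_of_mem _ h1
      · right
        rw [SimpleGraph.Walk.support_cons]
        exact List.mem_cons_of_mem _ h1
    · exfalso
      cases u' with
      | none => exact hO (Or.inl rfl)
      | some z' =>
        have hin : xv (2 * m + 2) ≤ z' ∧ z' ≤ xv (2 * m + 1) := by
          by_contra hc
          exact hO (Or.inr ⟨z', rfl, by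
            rcases not_and_or.mp hc with h1 | h1
            · exact Or.inl (by linarith [not_le.mp h1])
            · exact Or.inr (by linarith [not_le.mp h1])⟩)
        have hA' : z' ≠ xv (2 * m + 1) := fun he => hA (by rw [he])
        have hB' : z' ≠ xv (2 * m + 2) := fun he => hB (by rw [he])
        have hAB : xv (2 * m + 2) < xv (2 * m + 1) := by
          simpa [show 2 * (m + 1) = 2 * m + 2 from by ring] using even_lt_odd (m + 1) m
        exact no_crossing (edge_AB m) hAB
          h.symm (lt_of_le_of_ne hin.1 (Ne.symm hB')) (lt_of_le_of_ne hin.2 hA') hu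

lemma xv_injective_den {j1 j2 : ℕ} (h1 : 1 ≤ j1) (hlt : j1 < j2)
    (he : some (xv j1) = some (xv j2)) : False := by
  have hd := congrArg fden he
  rw [(xv_coords j1).2, (xv_coords j2).2] at hd
  have hfib : Nat.fib (j1 + 1) = Nat.fib (j2 + 1) := by unfold fz at hd; exact_mod_cast hd
  have : Nat.fib (j1 + 1) < Nat.fib (j2 + 1) :=
    Nat.fib_strictMonoOn (by simp; omega) (by simp; omega) (by omega)
  omega

lemma dist_lower (n : ℕ) : n ≤ fareyGraph.dist none (some (xv (2 * n + 2))) := by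
  obtain ⟨w, hw⟩ :=
    (farey_connected.exists_walk_length_eq_dist none (some (xv (2 * n + 2))))
  rw [← hw]
  classical
  -- for each m < n, the walk hits one of the two edge endpoints
  have hhit : ∀ m : ℕ, m < n →
      some (xv (2 * m + 1)) ∈ w.support ∨ some (xv (2 * m + 2)) ∈ w.support := by
    intro m hm
    apply crossing m w (Or.inl rfl)
    exact ⟨xv (2 * n + 2), rfl, (xv_between (by omega)).1.le, (xv_between (by omega)).2.le⟩
  set c : Fin n → Option ℚ := fun m =>
    if some (xv (2 * (m : ℕ) + 1)) ∈ w.support then some (xv (2 * (m : ℕ) + 1))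
    else some (xv (2 * (m : ℕ) + 2)) with hc
  have hcmem : ∀ m : Fin n, c m ∈ w.support := by
    intro m
    rw [hc]
    by_cases h : some (xv (2 * (m : ℕ) + 1)) ∈ w.support
    · simpa [h]
    · have := (hhit m m.2).resolve_left h
      simpa [h]
  have hcform : ∀ m : Fin n, c m = some (xv (2 * (m : ℕ) + 1)) ∨
      c m = some (xv (2 * (m : ℕ) + 2)) := by
    intro m
    rw [hc]
    by_cases h : some (xv (2 * (m : ℕ) + 1)) ∈ w.support <;> simp [h]
  have hcinj : Function.Injective c := by
    intro m1 m2 he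
    by_contra hne
    have hne' : (m1 : ℕ) ≠ (m2 : ℕ) := fun h => hne (Fin.ext h)
    rcases Nat.lt_or_ge (m1 : ℕ) (m2 : ℕ) with hlt | hge
    · rcases hcform m1 with h1 | h1 <;> rcases hcform m2 with h2 | h2 <;>
        exact xv_injective_den (by omega) (by omega) ((h1.symm.trans he).trans h2)
    · have hlt : (m2 : ℕ) < (m1 : ℕ) := by omega
      rcases hcform m1 with h1 | h1 <;> rcases hcform m2 with h2 | h2 <;>
        exact xv_injective_den (by omega) (by omega) ((h2.symm.trans he.symm).trans h1)
  have hnone : (none : Option ℚ) ∉ Finset.image c Finset.univ := by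
    simp only [Finset.mem_image]
    rintro ⟨m, -, hm⟩
    rcases hcform m with h1 | h1 <;> rw [h1] at hm <;> exact Option.some_ne_none _ hm
  have hsub : insert (none : Option ℚ) (Finset.image c Finset.univ) ⊆ w.support.toFinset := by
    intro x hx
    rcases Finset.mem_insert.mp hx with rfl | hx
    · exact List.mem_toFinset.mpr w.start_mem_support
    · obtain ⟨m, -, rfl⟩ := Finset.mem_image.mp hx
      exact List.mem_toFinset.mpr (hcmem m)
  have hcard1 : (insert (none : Option ℚ) (Finset.image c Finset.univ)).card = n + 1 := by
    rw [Finset.card_insert_of_notMem hnone,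
      Finset.card_image_of_injective _ hcinj, Finset.card_univ, Fintype.card_fin]
  have hcard2 : (insert (none : Option ℚ) (Finset.image c Finset.univ)).card ≤
      w.support.toFinset.card := Finset.card_le_card hsub
  have hcard3 : w.support.toFinset.card ≤ w.support.length := w.support.toFinset_card_le
  have hlen : w.support.length = w.length + 1 := w.length_support
  omega

def mobius (a b c d : ℤ) (v : Option ℚ) : Option ℚ :=
  if c * fnum v + d * fden v = 0 then none
  else some (((a * fnum v + b * fden v : ℤ) : ℚ) / ((c * fnum v + d * fden v : ℤ) : ℚ))

lemma mobius_coords {a b c d : ℤ} (hdet : a * d - b * c = 1 ∨ a * d - b * c = -1)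
    (v : Option ℚ) :
    ∃ ε : ℤ, (ε = 1 ∨ ε = -1) ∧
      fnum (mobius a b c d v) = ε * (a * fnum v + b * fden v) ∧
      fden (mobius a b c d v) = ε * (c * fnum v + d * fden v) := by
  obtain ⟨u0, w0, huw⟩ := fcoprime v
  set P := fnum v with hP
  set Q := fden v with hQ
  by_cases hq : c * P + d * Q = 0
  · -- image is ∞ ; a*P + b*Q is a unit
    have h1 : d * (a * P + b * Q) = (a * d - b * c) * P := by linear_combination b * hq
    have h2 : -c * (a * P + b * Q) = (a * d - b * c) * Q := by linear_combination -a * hq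
    have hdvdP : (a * P + b * Q) ∣ P := by
      rcases hdet with h | h
      · exact ⟨d, by rw [h] at h1; linarith [h1]⟩
      · exact ⟨-d, by rw [h] at h1; linarith [h1]⟩
    have hdvdQ : (a * P + b * Q) ∣ Q := by
      rcases hdet with h | h
      · exact ⟨-c, by rw [h] at h2; linarith [h2]⟩
      · exact ⟨c, by rw [h] at h2; linarith [h2]⟩
    have hunit : IsUnit (a * P + b * Q) := by
      obtain ⟨e1, he1⟩ := hdvdP
      obtain ⟨e2, he2⟩ := hdvdQ
      exact IsUnit.of_mul_eq_one (u0 * e1 + w0 * e2) (by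
        rw [show (a * P + b * Q) * (u0 * e1 + w0 * e2)
            = u0 * ((a * P + b * Q) * e1) + w0 * ((a * P + b * Q) * e2) from by ring,
          ← he1, ← he2]; linarith [huw])
    have hmob : mobius a b c d v = none := by rw [mobius, if_pos hq]
    rcases Int.isUnit_iff.mp hunit with hu | hu
    · refine ⟨1, Or.inl rfl, ?_, ?_⟩
      · rw [hmob]; show (1 : ℤ) = 1 * (a * P + b * Q); linarith [hu]
      · rw [hmob]; show (0 : ℤ) = 1 * (c * P + d * Q); linarith [hq]
    · refine ⟨-1, Or.inr rfl, ?_, ?_⟩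
      · rw [hmob]; show (1 : ℤ) = -1 * (a * P + b * Q); linarith [hu]
      · rw [hmob]; show (0 : ℤ) = -1 * (c * P + d * Q); linarith [hq]
  · -- image is finite
    have hD2 : (a * d - b * c) * (a * d - b * c) = 1 := by
      rcases hdet with h | h <;> rw [h] <;> norm_num
    have hcop : IsCoprime (a * P + b * Q) (c * P + d * Q) := by
      refine ⟨(a * d - b * c) * (u0 * d - w0 * c), (a * d - b * c) * (w0 * a - u0 * b), ?_⟩
      have expand : (a * d - b * c) * (u0 * d - w0 * c) * (a * P + b * Q)
          + (a * d - b * c) * (w0 * a - u0 * b) * (c * P + d * Q)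
          = ((a * d - b * c) * (a * d - b * c)) * (u0 * P + w0 * Q) := by ring
      rw [expand, hD2, one_mul]
      exact huw
    rcases lt_trichotomy (c * P + d * Q) 0 with hlt | heq | hgt
    · refine ⟨-1, Or.inr rfl, ?_, ?_⟩
      · have := (coords_div (p := -(a * P + b * Q)) (q := -(c * P + d * Q))
          (by omega) hcop.neg_left.neg_right).1
        rw [show ((-(a * P + b * Q) : ℤ) : ℚ) / ((-(c * P + d * Q) : ℤ) : ℚ)
            = ((a * P + b * Q : ℤ) : ℚ) / ((c * P + d * Q : ℤ) : ℚ) from by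
          push_cast; rw [neg_div_neg_eq]] at this
        rw [mobius, if_neg hq, ← hP, ← hQ]
        rw [this]; ring
      · have := (coords_div (p := -(a * P + b * Q)) (q := -(c * P + d * Q))
          (by omega) hcop.neg_left.neg_right).2
        rw [show ((-(a * P + b * Q) : ℤ) : ℚ) / ((-(c * P + d * Q) : ℤ) : ℚ)
            = ((a * P + b * Q : ℤ) : ℚ) / ((c * P + d * Q : ℤ) : ℚ) from by
          push_cast; rw [neg_div_neg_eq]] at this
        rw [mobius, if_neg hq, ← hP, ← hQ]
        rw [this]; ring
    · exact absurd heq hq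
    · refine ⟨1, Or.inl rfl, ?_, ?_⟩
      · have := (coords_div (p := a * P + b * Q) (q := c * P + d * Q) hgt hcop).1
        rw [mobius, if_neg hq, ← hP, ← hQ, this]; ring
      · have := (coords_div (p := a * P + b * Q) (q := c * P + d * Q) hgt hcop).2
        rw [mobius, if_neg hq, ← hP, ← hQ, this]; ring

lemma mobius_adj {a b c d : ℤ} (hdet : a * d - b * c = 1 ∨ a * d - b * c = -1)
    {v w : Option ℚ} (h : fareyGraph.Adj v w) :
    fareyGraph.Adj (mobius a b c d v) (mobius a b c d w) := by
  obtain ⟨ε1, hε1, hn1, hd1⟩ := mobius_coords hdet v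
  obtain ⟨ε2, hε2, hn2, hd2⟩ := mobius_coords hdet w
  apply adj_of_cross
  have key : fnum (mobius a b c d v) * fden (mobius a b c d w)
      - fden (mobius a b c d v) * fnum (mobius a b c d w)
      = (ε1 * ε2 * (a * d - b * c)) * (fnum v * fden w - fden v * fnum w) := by
    rw [hn1, hd1, hn2, hd2]; ring
  rcases (show _ ∧ _ from h).2 with hc | hc <;> rcases hε1 with rfl | rfl <;> rcases hε2 with rfl | rfl <;>
    rcases hdet with hD | hD <;> rw [key, hc, hD] <;> norm_num

lemma mobius_diag {D : ℤ} (hD : D = 1 ∨ D = -1) (v : Option ℚ) : mobius D 0 0 D v = v := by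
  have hD0 : D ≠ 0 := by rcases hD with rfl | rfl <;> norm_num
  cases v with
  | none =>
    simp [mobius, fnum, fden]
  | some x =>
    have hden : (0 : ℤ) * fnum (some x) + D * fden (some x) ≠ 0 := by
      simp only [fnum, fden, zero_mul, zero_add]
      intro hcon
      rcases mul_eq_zero.mp hcon with h | h
      · exact hD0 h
      · exact x.den_nz (by exact_mod_cast h)
    rw [mobius, if_neg hden]
    congr 1
    simp only [fnum, fden, mul_zero, add_zero, zero_mul, zero_add]
    push_cast
    rw [mul_div_mul_left _ _ (by exact_mod_cast hD0 : ((D : ℚ)) ≠ 0)]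
    exact Rat.num_div_den x

lemma mobius_comp {a b c d a' b' c' d' : ℤ}
    (hdet : a * d - b * c = 1 ∨ a * d - b * c = -1)
    (hdet' : a' * d' - b' * c' = 1 ∨ a' * d' - b' * c' = -1) (v : Option ℚ) :
    mobius a b c d (mobius a' b' c' d' v) =
      mobius (a * a' + b * c') (a * b' + b * d') (c * a' + d * c') (c * b' + d * d') v := by
  have hdet'' : (a * a' + b * c') * (c * b' + d * d') - (a * b' + b * d') * (c * a' + d * c') = 1
      ∨ (a * a' + b * c') * (c * b' + d * d') - (a * b' + b * d') * (c * a' + d * c') = -1 := by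
    have hmul : (a * a' + b * c') * (c * b' + d * d') - (a * b' + b * d') * (c * a' + d * c')
        = (a * d - b * c) * (a' * d' - b' * c') := by ring
    rcases hdet with h | h <;> rcases hdet' with h' | h' <;>
      rw [hmul, h, h'] <;> norm_num
  obtain ⟨ε', hε', h1', h2'⟩ := mobius_coords hdet' v
  obtain ⟨ε, hε, h1, h2⟩ := mobius_coords hdet (mobius a' b' c' d' v)
  obtain ⟨ε'', hε'', h1'', h2''⟩ := mobius_coords hdet'' v
  set P := fnum v
  set Q := fden v
  set qq := (c * a' + d * c') * P + (c * b' + d * d') * Q with hqq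
  set pp := (a * a' + b * c') * P + (a * b' + b * d') * Q with hpp
  have hfdL : fden (mobius a b c d (mobius a' b' c' d' v)) = (ε * ε') * qq := by
    rw [h2, h1', h2', hqq]; ring
  have hfnL : fnum (mobius a b c d (mobius a' b' c' d' v)) = (ε * ε') * pp := by
    rw [h1, h1', h2', hpp]; ring
  by_cases hq0 : qq = 0
  · have hLnone : mobius a b c d (mobius a' b' c' d' v) = none :=
      fden_eq_zero (by rw [hfdL, hq0, mul_zero])
    have hRnone : mobius (a * a' + b * c') (a * b' + b * d') (c * a' + d * c')
        (c * b' + d * d') v = none :=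
      fden_eq_zero (by rw [h2'', hq0, mul_zero])
    rw [hLnone, hRnone]
  · have hnL := fden_nonneg (mobius a b c d (mobius a' b' c' d' v))
    have hnR := fden_nonneg
      (mobius (a * a' + b * c') (a * b' + b * d') (c * a' + d * c') (c * b' + d * d') v)
    rw [hfdL] at hnL
    rw [h2''] at hnR
    have hεε : ε * ε' = ε'' := by
      rcases hε with rfl | rfl <;> rcases hε' with rfl | rfl <;>
        rcases hε'' with rfl | rfl <;> norm_num at hnL hnR ⊢ <;> omega
    apply vertex_ext
    · rw [hfnL, h1'', hεε]
    · rw [hfdL, h2'', hεε]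

def mobiusIso (a b c d : ℤ) (hdet : a * d - b * c = 1 ∨ a * d - b * c = -1) :
    fareyGraph ≃g fareyGraph where
  toFun := mobius a b c d
  invFun := mobius d (-b) (-c) a
  left_inv := by
    intro v
    have hdet2 : d * a - (-b) * (-c) = 1 ∨ d * a - (-b) * (-c) = -1 := by
      rcases hdet with h | h
      · exact Or.inl (by linarith [h])
      · exact Or.inr (by linarith [h])
    rw [mobius_comp hdet2 hdet v]
    have e1 : d * a + -b * c = a * d - b * c := by ring
    have e2 : d * b + -b * d = 0 := by ring
    have e3 : -c * a + a * c = 0 := by ring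
    have e4 : -c * b + a * d = a * d - b * c := by ring
    rw [e1, e2, e3, e4]
    exact mobius_diag hdet v
  right_inv := by
    intro v
    have hdet2 : d * a - (-b) * (-c) = 1 ∨ d * a - (-b) * (-c) = -1 := by
      rcases hdet with h | h
      · exact Or.inl (by linarith [h])
      · exact Or.inr (by linarith [h])
    rw [mobius_comp hdet hdet2 v]
    have e1 : a * d + b * -c = a * d - b * c := by ring
    have e2 : a * -b + b * a = 0 := by ring
    have e3 : c * d + d * -c = 0 := by ring
    have e4 : c * -b + d * a = a * d - b * c := by ring
    rw [e1, e2, e3, e4]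
    exact mobius_diag hdet v
  map_rel_iff' := by
    intro v w
    simp only [Equiv.coe_fn_mk]
    constructor
    · intro h
      have hdet2 : d * a - (-b) * (-c) = 1 ∨ d * a - (-b) * (-c) = -1 := by
        rcases hdet with h' | h'
        · exact Or.inl (by linarith [h'])
        · exact Or.inr (by linarith [h'])
      have h2 := mobius_adj hdet2 h
      rw [mobius_comp hdet2 hdet v, mobius_comp hdet2 hdet w] at h2
      have e1 : d * a + -b * c = a * d - b * c := by ring
      have e2 : d * b + -b * d = 0 := by ring
      have e3 : -c * a + a * c = 0 := by ring
      have e4 : -c * b + a * d = a * d - b * c := by ring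
      rw [e1, e2, e3, e4, mobius_diag hdet v, mobius_diag hdet w] at h2
      exact h2
    · exact mobius_adj hdet

lemma exists_iso_none (v : Option ℚ) : ∃ φ : fareyGraph ≃g fareyGraph, φ none = v := by
  obtain ⟨u0, w0, huw⟩ := fcoprime v
  set P := fnum v with hP
  set Q := fden v with hQ
  have hdet : P * u0 - (-w0) * Q = 1 ∨ P * u0 - (-w0) * Q = -1 :=
    Or.inl (by linarith [huw])
  refine ⟨mobiusIso P (-w0) Q u0 hdet, ?_⟩
  show mobius P (-w0) Q u0 none = v
  have hn : fnum (none : Option ℚ) = 1 := rfl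
  have hd : fden (none : Option ℚ) = 0 := rfl
  by_cases hQ0 : Q = 0
  · have hvnone : v = none := fden_eq_zero (by rw [← hQ]; exact hQ0)
    have hmn : mobius P (-w0) Q u0 none = none := by
      rw [mobius, if_pos (by simp [fnum, fden, hQ0])]
    rw [hmn, hvnone]
  · have hne : Q * fnum (none : Option ℚ) + u0 * fden (none : Option ℚ) ≠ 0 := by
      rw [hn, hd]; simpa using hQ0
    rw [mobius, if_neg hne]
    cases v with
    | none => exact absurd (by rw [hQ, fden]) hQ0
    | some x =>
      congr 1
      rw [hn, hd]
      simp only [mul_one, mul_zero, add_zero]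
      rw [hP, hQ]
      show ((x.num : ℚ)) / ((x.den : ℚ)) = x
      exact Rat.num_div_den x

/-- **(Manning, Section 5.)** The Farey graph is connected and has infinite
diameter; in particular, the orbit of any vertex under the group of graph
automorphisms of the Farey graph has infinite diameter. -/
theorem farey_graph_connected_infinite_diameter :
    fareyGraph.Connected ∧
    (∀ n : ℕ, ∃ x y : Option ℚ, n < fareyGraph.dist x y) ∧
    (∀ (v : Option ℚ) (n : ℕ), ∃ φ ψ : fareyGraph ≃g fareyGraph,
      n < fareyGraph.dist (φ v) (ψ v)) := by
  refine ⟨farey_connected, ?_, ?_⟩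
  · intro n
    refine ⟨none, some (xv (2 * (n + 1) + 2)), ?_⟩
    have := dist_lower (n + 1)
    omega
  · intro v n
    obtain ⟨g, hg⟩ := exists_iso_none v
    obtain ⟨h, hh⟩ := exists_iso_none (some (xv (2 * (n + 1) + 2)))
    refine ⟨g.symm, g.symm.trans h, ?_⟩
    have h1 : g.symm v = none := by rw [← hg, RelIso.symm_apply_apply]
    have h2 : (g.symm.trans h) v = some (xv (2 * (n + 1) + 2)) := by
      show h (g.symm v) = _
      rw [h1, hh]
    rw [h1, h2]
    have := dist_lower (n + 1)
    omega
end

section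
/- Let X and Y be geodesic metric spaces and let q : X → Y be a (K,C)-quasi-isometry. Suppose X is bushy with constant B > 0, meaning that for every x ∈ X the complement in X of the closed ball of radius B centered at x has at least three path components of infinite diameter. Then there is a constant B' > 0 such that Y is bushy with constant B'. -/
/-- A metric space `X` is bushy with constant `B` if, for every `x ∈ X`, the
complement of the closed ball of radius `B` about `x` has at least three path
components of infinite diameter. -/
def BushyMetricSpace (X : Type*) [MetricSpace X] (B : ℝ) : Prop :=
  ∀ x : X, ∃ z₁ z₂ z₃ : {y : X // B < dist x y},
    ¬ Joined z₁ z₂ ∧ ¬ Joined z₁ z₃ ∧ ¬ Joined z₂ z₃ ∧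
    (∀ n : ℕ, ∃ w, Joined z₁ w ∧ (n : ℝ) < dist (z₁ : X) (w : X)) ∧
    (∀ n : ℕ, ∃ w, Joined z₂ w ∧ (n : ℝ) < dist (z₂ : X) (w : X)) ∧
    (∀ n : ℕ, ∃ w, Joined z₃ w ∧ (n : ℝ) < dist (z₃ : X) (w : X))

/-!
Fix `y : Y` and `x : X` with `q x` near `y`. Each of the three unbounded components of the
complement of `closedBall x B` contains a point `w` whose component outside the much larger ball
`closedBall x R` is still unbounded: apply bushiness at a point far out in the component; at most
one of the three unbounded components around that point meets `closedBall x R`, since that ball is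
path connected outside the small ball, and one avoiding it comes back to within `B + 1` of the
far point. The three images `q w` work for `y`. Paths outside `closedBall x R` are pushed forward
by `q`, and paths outside `closedBall y B'` are pulled back along a coarse inverse of `q`: cut the
path into steps of length `< 1` and join the images of consecutive points by geodesics, which
stay far from the centre because the images are far and close to each other.
-/

open Bornology Metric Set

section Geodesic

variable {Z : Type*} [MetricSpace Z]

theorem IsGeodesicSpace.exists_path_dist_le (hZ : IsGeodesicSpace Z) (a b : Z) :
    ∃ p : Path a b, ∀ t, dist a (p t) ≤ dist a b := by
  obtain ⟨γ, hγ0, hγ1, hγ⟩ := hZ a b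
  set d := dist a b
  have hd : 0 ≤ d := dist_nonneg
  have hmem : ∀ t : unitInterval, (t : ℝ) * d ∈ Icc 0 d := fun t =>
    ⟨mul_nonneg t.2.1 hd, mul_le_of_le_one_left hd t.2.2⟩
  have hiso : Isometry fun s : Icc 0 d => γ s :=
    Isometry.of_dist_eq fun s t => (hγ s s.2 t t.2).trans (Real.dist_eq s t).symm
  have hcont : Continuous fun t : unitInterval => γ (t * d) :=
    hiso.continuous.comp
      ((by fun_prop : Continuous fun t : unitInterval => (t : ℝ) * d).subtype_mk hmem)
  refine ⟨⟨⟨fun t => γ (t * d), hcont⟩, by simp [hγ0], by simpa using hγ1⟩,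
    fun t => ?_⟩
  have h := hγ 0 ⟨le_rfl, hd⟩ _ (hmem t)
  rw [hγ0, zero_sub, abs_neg, abs_of_nonneg (hmem t).1] at h
  exact h.trans_le (hmem t).2

theorem IsGeodesicSpace.exists_dist_eq (hZ : IsGeodesicSpace Z) {a b : Z} {s : ℝ}
    (hs : s ∈ Icc 0 (dist a b)) : ∃ m, dist a m = s ∧ dist m b = dist a b - s := by
  obtain ⟨γ, hγ0, hγ1, hγ⟩ := hZ a b
  have hab : dist a b ∈ Icc 0 (dist a b) := ⟨dist_nonneg, le_rfl⟩
  refine ⟨γ s, ?_, ?_⟩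
  · have h := hγ 0 ⟨le_rfl, dist_nonneg⟩ s hs
    rwa [hγ0, zero_sub, abs_neg, abs_of_nonneg hs.1] at h
  · have h := hγ s hs _ hab
    rwa [hγ1, abs_of_nonpos (by linarith [hs.2]), neg_sub] at h

theorem IsGeodesicSpace.joinedIn_of_add_dist_lt (hZ : IsGeodesicSpace Z) {c a b : Z} {r : ℝ}
    (h : r + dist a b < dist c a) : JoinedIn {v | r < dist c v} a b := by
  obtain ⟨p, hp⟩ := hZ.exists_path_dist_le a b
  exact ⟨p, fun t => show r < dist c (p t) by linarith [dist_triangle_right c a (p t), hp t]⟩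

theorem IsGeodesicSpace.exists_joinedIn_dist_lt (hZ : IsGeodesicSpace Z) {c a : Z} {r ε : ℝ}
    (hr : 0 ≤ r) (ha : r < dist c a) (hε : 0 < ε) :
    ∃ b, dist c b < r + ε ∧ JoinedIn {v | r < dist c v} b a := by
  by_cases hca : dist c a < r + ε
  · exact ⟨a, hca, JoinedIn.refl ha⟩
  obtain ⟨b, hcb, hba⟩ := hZ.exists_dist_eq (a := c) (b := a) (s := r + ε / 2)
    ⟨by positivity, by linarith⟩
  exact ⟨b, by linarith, (hZ.joinedIn_of_add_dist_lt (by rw [dist_comm, hba]; linarith)).symm⟩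

end Geodesic

theorem JoinedIn.induction_of_dist_lt {X : Type*} [PseudoMetricSpace X] {F : Set X} {a b : X}
    (h : JoinedIn F a b) {ε : ℝ} (hε : 0 < ε) {P : X → Prop} (ha : P a)
    (step : ∀ u ∈ F, ∀ v ∈ F, dist u v < ε → P u → P v) : P b := by
  obtain ⟨γ, hγ⟩ := h
  suffices ∀ s t : unitInterval, P (γ s) → P (γ t) by simpa using this 0 1 (by simpa using ha)
  refine PreconnectedSpace.induction₂' _ (fun s => ?_) ⟨fun _ _ _ h₁ h₂ => h₂ ∘ h₁⟩
  filter_upwards [Metric.tendsto_nhds.1 (γ.continuous.tendsto s) ε hε] with t ht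
  exact ⟨step _ (hγ s) _ (hγ t) (by rwa [dist_comm]), step _ (hγ t) _ (hγ s) ht⟩

theorem IsGeodesicSpace.joinedIn_image {X Z : Type*} [PseudoMetricSpace X] [MetricSpace Z]
    (hZ : IsGeodesicSpace Z) {f : X → Z} {L : ℝ}
    (hf : ∀ u v, dist u v < 1 → dist (f u) (f v) ≤ L)
    {F : Set X} {c : Z} {r : ℝ} (hF : ∀ u ∈ F, r + L < dist c (f u)) {a b : X}
    (h : JoinedIn F a b) : JoinedIn {v | r < dist c v} (f a) (f b) := by
  have hL : 0 ≤ L := dist_nonneg.trans (hf a a (by simp))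
  refine h.induction_of_dist_lt (P := fun v => JoinedIn _ (f a) (f v)) one_pos
    (JoinedIn.refl ?_) fun u hu v _ huv hau => ?_
  · exact show r < dist c (f a) by linarith [hF a h.mem.1]
  · exact hau.trans (hZ.joinedIn_of_add_dist_lt (by linarith [hf u v huv, hF u hu]))

theorem not_isBounded_pathComponentIn_iff {X : Type*} [PseudoMetricSpace X] {F : Set X} {z : X}
    (hz : z ∈ F) : ¬ IsBounded (pathComponentIn F z) ↔
      ∀ n : ℕ, ∃ w : F, Joined (⟨z, hz⟩ : F) w ∧ (n : ℝ) < dist z w := by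
  rw [isBounded_iff_subset_closedBall z]
  push Not
  constructor
  · intro h n
    obtain ⟨w, hw, hwn⟩ := not_subset.1 (h n)
    exact ⟨⟨w, hw.mem.2⟩, (joinedIn_iff_joined hz _).1 hw, by simpa [dist_comm] using hwn⟩
  · intro h r hsub
    obtain ⟨n, hn⟩ := exists_nat_gt r
    obtain ⟨w, hw, hwn⟩ := h n
    have := hsub ((joinedIn_iff_joined hz w.2).2 hw)
    rw [mem_closedBall, dist_comm] at this
    linarith

theorem bushyMetricSpace_iff {X : Type*} [MetricSpace X] {B : ℝ} :
    BushyMetricSpace X B ↔ ∀ x : X, ∃ z : Fin 3 → X, (∀ i, B < dist x (z i)) ∧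
      Pairwise (fun i j => ¬ JoinedIn {v | B < dist x v} (z i) (z j)) ∧
      ∀ i, ¬ IsBounded (pathComponentIn {v | B < dist x v} (z i)) := by
  refine forall_congr' fun x => ⟨?_, ?_⟩
  · rintro ⟨z₁, z₂, z₃, h₁₂, h₁₃, h₂₃, hu₁, hu₂, hu₃⟩
    have sep : ∀ {u v : {y // B < dist x y}}, ¬ Joined u v →
        ¬ JoinedIn {v | B < dist x v} u v :=
      fun h h' => h ((joinedIn_iff_joined _ _).1 h')
    have unb : ∀ {u : {y // B < dist x y}},
        (∀ n : ℕ, ∃ w, Joined u w ∧ (n : ℝ) < dist (u : X) w) →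
          ¬ IsBounded (pathComponentIn {v | B < dist x v} u) :=
      fun {u} h => (not_isBounded_pathComponentIn_iff (F := {v | B < dist x v}) u.2).2 h
    refine ⟨![z₁, z₂, z₃], fun i => ?_, fun i j hij => ?_, fun i => ?_⟩
    · fin_cases i <;> simp [z₁.2, z₂.2, z₃.2]
    · fin_cases i <;> fin_cases j <;> simp only [ne_eq, not_true_eq_false] at hij <;>
        simp only [Fin.zero_eta, Fin.mk_one, Fin.reduceFinMk, Matrix.cons_val] <;>
        first | exact sep ‹_› | exact fun h => sep ‹_› h.symm
    · fin_cases i <;> simp only [Fin.zero_eta, Fin.mk_one, Fin.reduceFinMk, Matrix.cons_val] <;>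
        exact unb ‹_›
  · rintro ⟨z, hz, hsep, hunb⟩
    refine ⟨⟨z 0, hz 0⟩, ⟨z 1, hz 1⟩, ⟨z 2, hz 2⟩, ?_, ?_, ?_, ?_, ?_, ?_⟩
    all_goals first
      | exact fun h => hsep (by decide) ((joinedIn_iff_joined _ _).2 h)
      | exact (not_isBounded_pathComponentIn_iff _).1 (hunb _)

theorem not_isBounded_image {X Y : Type*} [PseudoMetricSpace X] [PseudoMetricSpace Y]
    {f : X → Y} {K C : ℝ} (hK : 0 ≤ K) (hf : ∀ a b, dist a b ≤ K * (dist (f a) (f b) + C))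
    {s : Set X} (hs : ¬ IsBounded s) : ¬ IsBounded (f '' s) := by
  intro hfs
  obtain ⟨D, hD⟩ := isBounded_iff.1 hfs
  exact hs (isBounded_iff.2 ⟨K * (D + C), fun a ha b hb =>
    (hf a b).trans (by gcongr; exact hD (mem_image_of_mem f ha) (mem_image_of_mem f hb))⟩)

theorem IsGeodesicSpace.joinedIn_of_joinedIn_image {X Y : Type*} [MetricSpace X]
    [PseudoMetricSpace Y] (hX : IsGeodesicSpace X) {q : X → Y} {K C : ℝ} (hK : 0 < K)
    (hup : ∀ a b, dist (q a) (q b) ≤ K * dist a b + C)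
    (hlow : ∀ a b, dist a b ≤ K * (dist (q a) (q b) + C))
    (honto : ∀ y, ∃ x, dist y (q x) ≤ C) {x : X} {y : Y} (hxy : dist y (q x) ≤ C) {r : ℝ}
    {a b : X} (h : JoinedIn {v | K * (r + K * (1 + 3 * C)) + 3 * C < dist y v} (q a) (q b)) :
    JoinedIn {u | r < dist x u} a b := by
  choose g hg using honto
  have hC : 0 ≤ C := dist_nonneg.trans hxy
  set L := K * (1 + 3 * C) with hL
  have hfar : ∀ u, K * (r + L) + 2 * C < dist y (q u) → r + L < dist x u := fun u hu =>
    lt_of_mul_lt_mul_left (by linarith [hup x u, dist_triangle y (q x) (q u)]) hK.le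
  have hgfar : ∀ v, K * (r + L) + 3 * C < dist y v → r + L < dist x (g v) := fun v hv =>
    hfar _ (by linarith [dist_triangle_right y v (q (g v)), hg v])
  have hgstep : ∀ u v, dist u v < 1 → dist (g u) (g v) ≤ L := fun u v huv =>
    (hlow _ _).trans (mul_le_mul_of_nonneg_left
      (by linarith [dist_triangle4 (q (g u)) u v (q (g v)), hg u, hg v, dist_comm u (q (g u))])
      hK.le)
  have hend : ∀ u, K * (r + L) + 3 * C < dist y (q u) →
      JoinedIn {u | r < dist x u} u (g (q u)) := fun u hu => by
    have hstep : dist u (g (q u)) ≤ L :=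
      (hlow _ _).trans (mul_le_mul_of_nonneg_left
        (by linarith [hg (q u), dist_comm (q u) (q (g (q u)))]) hK.le)
    exact hX.joinedIn_of_add_dist_lt (by linarith [hfar u (by linarith)])
  exact (hend a h.mem.1).trans ((hX.joinedIn_image hgstep hgfar h).trans (hend b h.mem.2).symm)

section Bushy

variable {X : Type*} [MetricSpace X] {B : ℝ}

theorem BushyMetricSpace.exists_unbounded_pathComponentIn_subset
    (hbushy : BushyMetricSpace X B) (hX : IsGeodesicSpace X) {x w : X} {R : ℝ}
    (hw : R + B < dist x w) :
    ∃ z, B < dist w z ∧ ¬ IsBounded (pathComponentIn {v | B < dist w v} z) ∧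
      pathComponentIn {v | B < dist w v} z ⊆ {v | R < dist x v} := by
  obtain ⟨z, hz, hsep, hunb⟩ := bushyMetricSpace_iff.1 hbushy w
  have toX : ∀ v, dist x v ≤ R → JoinedIn {v | B < dist w v} x v := fun v hv =>
    hX.joinedIn_of_add_dist_lt (by rw [dist_comm w x]; linarith)
  by_cases h0 : pathComponentIn {v | B < dist w v} (z 0) ⊆ {v | R < dist x v}
  · exact ⟨z 0, hz 0, hunb 0, h0⟩
  refine ⟨z 1, hz 1, hunb 1, fun v hv => ?_⟩
  by_contra! hv'
  obtain ⟨u, hu, hu'⟩ := not_subset.1 h0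
  exact hsep (by decide : (0 : Fin 3) ≠ 1)
    ((hu.trans (toX u (not_lt.1 hu')).symm).trans ((toX v (not_lt.1 hv')).trans hv.symm))

theorem BushyMetricSpace.exists_joinedIn_unbounded_pathComponentIn
    (hbushy : BushyMetricSpace X B) (hX : IsGeodesicSpace X) (hB : 0 ≤ B) {x z : X}
    (hz : ¬ IsBounded (pathComponentIn {v | B < dist x v} z)) (R : ℝ) :
    ∃ w, R < dist x w ∧ JoinedIn {v | B < dist x v} z w ∧
      ¬ IsBounded (pathComponentIn {v | R < dist x v} w) := by
  obtain ⟨w, hzw, hw⟩ :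
      ∃ w ∈ pathComponentIn {v | B < dist x v} z, max (R + B) (2 * B + 1) < dist x w := by
    rw [isBounded_iff_subset_closedBall x] at hz
    push Not at hz
    obtain ⟨w, hw, hw'⟩ := not_subset.1 (hz (max (R + B) (2 * B + 1)))
    exact ⟨w, hw, by simpa [dist_comm] using hw'⟩
  obtain ⟨z', hz', hunb, hsub⟩ :=
    hbushy.exists_unbounded_pathComponentIn_subset hX ((le_max_left _ _).trans_lt hw)
  obtain ⟨b, hwb, hbz'⟩ := hX.exists_joinedIn_dist_lt hB hz' one_pos
  have hb : b ∈ pathComponentIn {v | B < dist w v} z' := hbz'.symm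
  refine ⟨b, hsub hb, hzw.trans (hX.joinedIn_of_add_dist_lt ?_), fun hbdd => hunb ?_⟩
  · linarith [le_max_right (R + B) (2 * B + 1)]
  · exact hbdd.subset <| IsPathConnected.subset_pathComponentIn
      (isPathConnected_pathComponentIn (F := {v | B < dist w v}) hz') hb hsub

end Bushy

/-- **(Manning, Remark 4.15.)** Bushiness is a quasi-isometry invariant of geodesic
metric spaces: if `q : X → Y` is a `(K,C)`-quasi-isometry and `X` is bushy with
constant `B > 0`, then `Y` is bushy with some constant `B' > 0`. -/
theorem bushy_quasiisometry_invariant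
    {X Y : Type*} [MetricSpace X] [MetricSpace Y]
    (hX : IsGeodesicSpace X) (hY : IsGeodesicSpace Y)
    (K C : ℝ) (hK : 1 ≤ K) (hC : 0 ≤ C) (q : X → Y)
    (hqi : ∀ x₁ x₂ : X,
      dist x₁ x₂ / K - C ≤ dist (q x₁) (q x₂) ∧
      dist (q x₁) (q x₂) ≤ K * dist x₁ x₂ + C)
    (honto : ∀ y : Y, ∃ x : X, dist y (q x) ≤ C)
    (B : ℝ) (hB : 0 < B) (hbushy : BushyMetricSpace X B) :
    ∃ B' : ℝ, 0 < B' ∧ BushyMetricSpace Y B' := by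
  have hK0 : 0 < K := one_pos.trans_le hK
  have hup : ∀ a b, dist (q a) (q b) ≤ K * dist a b + C := fun a b => (hqi a b).2
  have hlow : ∀ a b, dist a b ≤ K * (dist (q a) (q b) + C) := fun a b =>
    (div_le_iff₀' hK0).1 (by linarith [(hqi a b).1])
  set B' := K * (B + K * (1 + 3 * C)) + 3 * C
  set R := K * (B' + K + 3 * C)
  refine ⟨B', by positivity, bushyMetricSpace_iff.2 fun y => ?_⟩
  obtain ⟨x, hxy⟩ := honto y
  obtain ⟨z, -, hsep, hunb⟩ := bushyMetricSpace_iff.1 hbushy x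
  choose w hwR hzw hw using fun i =>
    hbushy.exists_joinedIn_unbounded_pathComponentIn hX hB.le (hunb i) R
  have hfar : ∀ u, R < dist x u → B' + (K + C) < dist y (q u) := fun u hu => by
    have := lt_of_mul_lt_mul_left (hu.trans_le (hlow x u)) hK0.le
    linarith [dist_triangle_left (q x) (q u) y]
  have hpush : ∀ {a b}, JoinedIn {u | R < dist x u} a b →
      JoinedIn {v | B' < dist y v} (q a) (q b) :=
    hY.joinedIn_image (fun u v huv =>
      (hup u v).trans (by linarith [mul_le_of_le_one_right hK0.le huv.le])) hfar
  refine ⟨q ∘ w, fun i => ?_, fun i j hij hj => hsep hij ?_, fun i hbdd => ?_⟩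
  · exact show B' < dist y (q (w i)) by linarith [hfar _ (hwR i)]
  · exact (hzw i).trans ((hX.joinedIn_of_joinedIn_image hK0 hup hlow honto hxy hj).trans
      (hzw j).symm)
  · exact not_isBounded_image hK0.le hlow (hw i)
      (hbdd.subset (image_subset_iff.2 fun u hu => hpush hu))
end
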